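/- arXiv:1406.0449 — 6 statements merged into one kernel-verified Lean document; each statement's English description precedes it below -/
import Mathlib

section
/- Consider the fixed-m uniform WARM: for integers n ≥ 3 and 2 ≤ m ≤ n−1, let p(A) = 1/C(n,m) for every A ⊆ [n] with |A| = m, and p(A) = 0 otherwise. Then the equilibrium (1/n, …, 1/n) is linearly stable if and only if α < m(n−1)/(n(m−1)), and critical if and only if α = m(n−1)/(n(m−1)). -/
open Finset

noncomputable section

/-- Membership in the simplex `Δ`. -/
def InSimplex {ι : Type*} [Fintype ι] (v : ι → ℝ) : Prop :=
  (∀ i, 0 ≤ v i) ∧ ∑ i, v i = 1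

/-- A WARM weight: a probability distribution on the subsets of the colour set,
giving no mass to the empty set. -/
def IsWarmWeight {ι : Type*} [Fintype ι] [DecidableEq ι] (p : Finset ι → ℝ) : Prop :=
  p ∅ = 0 ∧ (∀ A, 0 ≤ p A ∧ p A ≤ 1) ∧ ∑ A : Finset ι, p A = 1

/-- The WARM vector field `F`. -/
def warmF {ι : Type*} [Fintype ι] [DecidableEq ι] (α : ℝ) (p : Finset ι → ℝ)
    (v : ι → ℝ) (i : ι) : ℝ :=
  -v i + ∑ A ∈ Finset.univ.filter (fun A : Finset ι => i ∈ A),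
      p A * v i ^ α / (∑ j ∈ A, v j ^ α)

/-- The Jacobian matrix `D(v)`. -/
def warmD {ι : Type*} [Fintype ι] [DecidableEq ι] (α : ℝ) (p : Finset ι → ℝ)
    (v : ι → ℝ) : Matrix ι ι ℝ :=
  Matrix.of fun i k =>
    if i = k then
      -1 + α * v i ^ (α - 1) *
        ∑ A ∈ Finset.univ.filter (fun A : Finset ι => i ∈ A),
          p A * ((∑ j ∈ A, v j ^ α) - v i ^ α) / (∑ j ∈ A, v j ^ α) ^ 2
    else
      -(α * v k ^ (α - 1) * v i ^ α *
        ∑ A ∈ Finset.univ.filter (fun A : Finset ι => i ∈ A ∧ k ∈ A),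
          p A / (∑ j ∈ A, v j ^ α) ^ 2)

/-- `μ ∈ ℂ` is an eigenvalue of the real matrix `M`, i.e. a root of its
characteristic polynomial. -/
def IsEigenvalue {ι : Type*} [Fintype ι] [DecidableEq ι] (M : Matrix ι ι ℝ) (μ : ℂ) : Prop :=
  (M.charpoly.map (algebraMap ℝ ℂ)).IsRoot μ

/-- Linear stability: every complex eigenvalue has negative real part. -/
def LinStable {ι : Type*} [Fintype ι] [DecidableEq ι] (M : Matrix ι ι ℝ) : Prop :=
  ∀ μ : ℂ, IsEigenvalue M μ → μ.re < 0

/-- Linear instability: some eigenvalue has positive real part. -/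
def LinUnstable {ι : Type*} [Fintype ι] [DecidableEq ι] (M : Matrix ι ι ℝ) : Prop :=
  ∃ μ : ℂ, IsEigenvalue M μ ∧ 0 < μ.re

/-- Critical: neither linearly stable nor linearly unstable. -/
def CriticalPt {ι : Type*} [Fintype ι] [DecidableEq ι] (M : Matrix ι ι ℝ) : Prop :=
  ¬ LinStable M ∧ ¬ LinUnstable M


/-- The fixed-`m` uniform WARM weight: uniform over all subsets of size `m`. -/
def unifP (n m : ℕ) : Finset (Fin n) → ℝ :=
  fun A => if A.card = m then 1 / (n.choose m : ℝ) else 0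

/-! At the barycentre all `v_j ^ α` coincide and every `m`-set carries the same weight, so `D` has
a constant diagonal `-1 + α (m - 1) / m` and a constant off-diagonal `-α (m - 1) / (m (n - 1))`
(the number of `m`-sets through one, resp. two, given colours is `C(n-1, m-1)`, resp.
`C(n-2, m-2)`). Written as `a • 1 + b • J` with `J` the all-ones matrix, `D` has the eigenvalue
`a` on the sum-zero vectors and `a + n b` on the constants; these are `α / α_c - 1` with
`α_c = m (n - 1) / (n (m - 1))`, and `-1`. Both are real, so the sign of `α / α_c - 1`
decides. -/

lemma cast_choose_pred_div {n m : ℕ} (hm : 1 ≤ m) (hmn : m ≤ n) :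
    ((n - 1).choose (m - 1) : ℝ) / n.choose m = m / n := by
  have h : (n.choose m * m : ℝ) = n * (n - 1).choose (m - 1) := by
    exact_mod_cast by simpa using Nat.choose_mul (n := n) hm
  have hpos : (0 : ℝ) < n.choose m := by exact_mod_cast Nat.choose_pos hmn
  have hn : (0 : ℝ) < n := by exact_mod_cast hm.trans hmn
  rw [div_eq_div_iff hpos.ne' hn.ne']
  linarith

lemma cast_choose_sub_two_div {n m : ℕ} (hm : 2 ≤ m) (hmn : m ≤ n) :
    ((n - 2).choose (m - 2) : ℝ) / n.choose m = m * (m - 1) / (n * (n - 1)) := by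
  have h : (n.choose m * m.choose 2 : ℝ) = n.choose 2 * (n - 2).choose (m - 2) := by
    exact_mod_cast Nat.choose_mul hm
  have hpos : (0 : ℝ) < n.choose m := by exact_mod_cast Nat.choose_pos hmn
  have hn : (2 : ℝ) ≤ n := by exact_mod_cast hm.trans hmn
  rw [Nat.cast_choose_two, Nat.cast_choose_two] at h
  rw [div_eq_div_iff hpos.ne' (by nlinarith)]
  linarith

open Matrix in
lemma det_smul_one_add_smul_allOnes {K ι : Type*} [Field K] [Fintype ι] [DecidableEq ι]
    [Nonempty ι] (a b : K) :
    det (a • (1 : Matrix ι ι K) + b • of fun _ _ => 1) =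
      a ^ (Fintype.card ι - 1) * (a + Fintype.card ι * b) := by
  have hcard : Fintype.card ι = Fintype.card ι - 1 + 1 :=
    (Nat.sub_add_cancel Fintype.card_pos).symm
  obtain rfl | ha := eq_or_ne a 0
  · obtain hlt | hle := Nat.lt_or_ge 1 (Fintype.card ι)
    · obtain ⟨i, j, hij⟩ := Fintype.exists_pair_of_one_lt_card hlt
      rw [det_zero_of_row_eq hij (by ext; simp), zero_pow (by omega), zero_mul]
    · have hone : Fintype.card ι = 1 := le_antisymm hle Fintype.card_pos
      rw [det_eq_elem_of_card_eq_one hone (Classical.arbitrary ι), hone]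
      simp
  · have hfactor : a • (1 : Matrix ι ι K) + b • of (fun _ _ => 1) =
        a • (1 + replicateCol Unit (fun _ : ι => b / a) *
          replicateRow Unit (fun _ : ι => (1 : K))) := by
      ext i j
      by_cases h : i = j <;> simp [h, one_apply, mul_apply, mul_add, mul_div_cancel₀ _ ha]
    rw [hfactor, det_smul, det_one_add_replicateCol_mul_replicateRow, hcard, pow_succ, ← hcard]
    simp only [dotProduct, one_mul, sum_const, card_univ, nsmul_eq_mul]
    field_simp

section Spectrum

variable {ι : Type*} [Fintype ι] [DecidableEq ι]

open Matrix in
lemma isEigenvalue_constDiag_constOffDiag_iff (hι : 2 ≤ Fintype.card ι) (a b : ℝ) (μ : ℂ) :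
    IsEigenvalue (of fun i k : ι => if i = k then a else b) μ ↔
      μ = ↑(a - b) ∨ μ = ↑(a + (Fintype.card ι - 1) * b) := by
  have : Nonempty ι := Fintype.card_pos_iff.mp (by omega)
  have hcharmatrix :
      scalar ι μ - (of fun i k : ι => if i = k then a else b).map (algebraMap ℝ ℂ) =
      (μ - ↑(a - b)) • (1 : Matrix ι ι ℂ) + (-b : ℂ) • of fun _ _ => 1 := by
    ext i k
    by_cases h : i = k <;> simp [h, one_apply]; ring
  rw [IsEigenvalue, ← charpoly_map, Polynomial.IsRoot.def, eval_charpoly, hcharmatrix,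
    det_smul_one_add_smul_allOnes, mul_eq_zero, pow_eq_zero_iff (by omega), sub_eq_zero]
  refine or_congr Iff.rfl ⟨fun h => ?_, fun h => ?_⟩ <;> push_cast at * <;> linear_combination h

variable {M : Matrix ι ι ℝ} {x y : ℝ}

lemma linStable_iff_of_isEigenvalue_iff (hM : ∀ μ, IsEigenvalue M μ ↔ μ = x ∨ μ = y) :
    LinStable M ↔ x < 0 ∧ y < 0 := by
  simp only [LinStable, hM, forall_eq_or_imp, forall_eq, Complex.ofReal_re]

lemma linUnstable_iff_of_isEigenvalue_iff (hM : ∀ μ, IsEigenvalue M μ ↔ μ = x ∨ μ = y) :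
    LinUnstable M ↔ 0 < x ∨ 0 < y := by
  simp only [LinUnstable, hM, or_and_right, exists_or, exists_eq_left, Complex.ofReal_re]

end Spectrum

open Matrix in
lemma warmD_const {ι : Type*} [Fintype ι] [DecidableEq ι] (α : ℝ) (p : Finset ι → ℝ)
    {c : ℝ} (hc : 0 < c) :
    warmD α p (fun _ => c) = of fun i k =>
      if i = k then -1 + α / c * ∑ A ∈ univ.filter (i ∈ ·), p A * ((#A - 1) / #A ^ 2)
      else -(α / c * ∑ A ∈ univ.filter (fun A => i ∈ A ∧ k ∈ A), p A / #A ^ 2) := by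
  have hw : c ^ α ≠ 0 := (Real.rpow_pos_of_pos hc α).ne'
  ext i k
  simp only [warmD, of_apply, sum_const, nsmul_eq_mul, Real.rpow_sub_one hc.ne', mul_sum]
  split_ifs
  · congr 1
    refine sum_congr rfl fun A _ => ?_
    field_simp
  · congr 1
    refine sum_congr rfl fun A _ => ?_
    field_simp

lemma sum_filter_superset_unifP {n m : ℕ} (s : Finset (Fin n)) (hs : #s ≤ m) (f : ℕ → ℝ) :
    ∑ A ∈ univ.filter (s ⊆ ·), unifP n m A * f #A =
      f m * (n - #s).choose (m - #s) / n.choose m := by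
  have hterm (A : Finset (Fin n)) :
      unifP n m A * f #A = if #A = m then f m / n.choose m else 0 := by
    unfold unifP
    split_ifs with h
    · rw [h]; ring
    · simp
  have hcard := card_filter_powersetCard_subset s univ m (subset_univ s) hs
  rw [powersetCard_eq_filter, powerset_univ, filter_filter, card_univ, Fintype.card_fin] at hcard
  simp only [hterm, sum_ite, sum_const_zero, add_zero, sum_const, nsmul_eq_mul, filter_filter]
  rw [filter_congr fun A _ => and_comm, hcard]
  ring

open Matrix in
lemma warmD_unifP_barycentre {n m : ℕ} (hm : 2 ≤ m) (hmn : m ≤ n - 1) (α : ℝ) :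
    warmD α (unifP n m) (fun _ => 1 / (n : ℝ)) = of fun i k =>
      if i = k then -1 + α * (m - 1) / m else -(α * (m - 1) / (m * (n - 1))) := by
  have hn1 : (1 : ℝ) < n := by exact_mod_cast (by omega : 1 < n)
  rw [warmD_const _ _ (by positivity)]
  ext i k
  simp only [of_apply]
  split_ifs with hik
  · have hi : univ.filter (i ∈ ·) = univ.filter (({i} : Finset (Fin n)) ⊆ ·) := by
      simp only [singleton_subset_iff]
    rw [hi, sum_filter_superset_unifP _ (by rw [card_singleton]; omega)
      (fun a : ℕ => ((a : ℝ) - 1) / a ^ 2), card_singleton, mul_div_assoc,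
      cast_choose_pred_div (by omega) (by omega)]
    field_simp
  · have hik' : univ.filter (fun A => i ∈ A ∧ k ∈ A) =
        univ.filter (({i, k} : Finset (Fin n)) ⊆ ·) := by
      simp only [insert_subset_iff, singleton_subset_iff]
    simp_rw [div_eq_mul_one_div (unifP n m _)]
    rw [hik', sum_filter_superset_unifP _ (by rw [card_pair hik]; omega)
      (fun a : ℕ => 1 / (a : ℝ) ^ 2), card_pair hik, mul_div_assoc,
      cast_choose_sub_two_div hm (by omega)]
    field_simp

theorem fixedm_barycentre_stability_general (n m : ℕ) (hm : 2 ≤ m) (hmn : m ≤ n - 1)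
    (α : ℝ) :
    (LinStable (warmD α (unifP n m) (fun _ => 1 / (n : ℝ))) ↔
      α < (m : ℝ) * ((n : ℝ) - 1) / ((n : ℝ) * ((m : ℝ) - 1))) ∧
    (CriticalPt (warmD α (unifP n m) (fun _ => 1 / (n : ℝ))) ↔
      α = (m : ℝ) * ((n : ℝ) - 1) / ((n : ℝ) * ((m : ℝ) - 1))) := by
  set αc : ℝ := m * (n - 1) / (n * (m - 1)) with hαc_def
  have hm1 : (1 : ℝ) < m := by exact_mod_cast hm
  have hn1 : (1 : ℝ) < n := by exact_mod_cast (by omega : 1 < n)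
  have hαc : 0 < αc := by
    apply div_pos <;> apply mul_pos <;> linarith
  have hspec (μ : ℂ) : IsEigenvalue (warmD α (unifP n m) (fun _ => 1 / (n : ℝ))) μ ↔
      μ = ↑(α / αc - 1) ∨ μ = ↑(-1 : ℝ) := by
    rw [warmD_unifP_barycentre hm hmn,
      isEigenvalue_constDiag_constOffDiag_iff (by rw [Fintype.card_fin]; omega), Fintype.card_fin,
      hαc_def]
    have : (m : ℝ) - 1 ≠ 0 := by linarith
    have : (n : ℝ) - 1 ≠ 0 := by linarith
    congr! 3 <;> field_simp <;> ring
  rw [CriticalPt, linStable_iff_of_isEigenvalue_iff hspec,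
    linUnstable_iff_of_isEigenvalue_iff hspec, sub_neg, div_lt_one hαc, sub_pos, one_lt_div hαc]
  norm_num [le_antisymm_iff, and_comm]

/-- **Stability of `1/n` for the fixed-`m` uniform WARM.**
The barycentre is linearly stable iff `α < m(n−1)/(n(m−1))`, critical iff equality. -/
theorem fixedm_barycentre_stability (n m : ℕ) (hn : 3 ≤ n) (hm : 2 ≤ m) (hmn : m ≤ n - 1)
    (α : ℝ) (hα : 1 < α) :
    (LinStable (warmD α (unifP n m) (fun _ => 1 / (n : ℝ))) ↔
      α < (m : ℝ) * ((n : ℝ) - 1) / ((n : ℝ) * ((m : ℝ) - 1))) ∧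
    (CriticalPt (warmD α (unifP n m) (fun _ => 1 / (n : ℝ))) ↔
      α = (m : ℝ) * ((n : ℝ) - 1) / ((n : ℝ) * ((m : ℝ) - 1))) :=
  fixedm_barycentre_stability_general n m hm hmn α

end
end

section
/- Let n ≥ 2 and let p be a WARM weight on [n] with p({n}) = 0. Define a WARM weight p' on [n−1] by p'(A') = p(A') + p(A' ∪ {n}) for nonempty A' ⊆ [n−1] (and p'(∅) = 0). Then a vector v = (v_1, …, v_{n−1}, 0) ∈ Δ_n is an equilibrium (respectively, a linearly stable equilibrium) for the WARM weight p if and only if v' = (v_1, …, v_{n−1}) ∈ Δ_{n−1} is an equilibrium (respectively, a linearly stable equilibrium) for the WARM weight p'. -/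
open Finset

noncomputable section

/-- The reduced WARM weight on `[n−1]` obtained by deleting the last colour:
`p'(A') = p(A') + p(A' ∪ {n})` for nonempty `A'`, and `p'(∅) = 0`. -/
def reduceP (n : ℕ) (p : Finset (Fin (n + 1)) → ℝ) : Finset (Fin n) → ℝ :=
  fun A' =>
    if A' = ∅ then 0
    else p (A'.map Fin.castSuccEmb) + p (insert (Fin.last n) (A'.map Fin.castSuccEmb))

/-! Colour `n` is invisible at a vector whose last coordinate is `0`: since `0 ^ α = 0`, the sets
`A'` and `A' ∪ {n}` contribute to `F` and to `D` through the same power sum `∑_{j ∈ A'} v_j ^ α`,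
so the two weights may be merged into `p'(A')`, and the last coordinate of `F` vanishes. Since
`α > 1`, the last column of `D(v)` is zero apart from the diagonal entry `-1`; hence `D(v)` is block
triangular with diagonal blocks `D'(v')` and `(-1)`, and its spectrum is that of `D'(v')` with `-1`
added. -/

open Polynomial

section

variable {n : ℕ}

theorem Finset.sum_finset_fin_succ {M : Type*} [AddCommMonoid M]
    (f : Finset (Fin (n + 1)) → M) :
    ∑ A, f A = ∑ A' : Finset (Fin n),
      (f (A'.map Fin.castSuccEmb) + f (insert (Fin.last n) (A'.map Fin.castSuccEmb))) := by
  have huniv : (univ : Finset (Fin (n + 1))) = insert (Fin.last n) (univ.image Fin.castSucc) := by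
    rw [Fin.univ_castSuccEmb, cons_eq_insert, map_eq_image, Fin.coe_castSuccEmb]
  have hinj := (image_injective (Fin.castSucc_injective n)).injOn
    (s := ((univ : Finset (Fin n)).powerset : Set (Finset (Fin n))))
  rw [← powerset_univ, huniv, sum_powerset_insert (by simp), powerset_image, sum_image hinj,
    sum_image hinj, powerset_univ, ← sum_add_distrib]
  simp [map_eq_image]

theorem Fin.last_notMem_map_castSuccEmb (A : Finset (Fin n)) :
    Fin.last n ∉ A.map Fin.castSuccEmb := by
  simp [(Fin.castSucc_lt_last _).ne]

theorem Fin.castSucc_mem_insert_last_map_iff (i : Fin n) (A : Finset (Fin n)) :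
    i.castSucc ∈ insert (Fin.last n) (A.map Fin.castSuccEmb) ↔ i ∈ A := by
  simp [(Fin.castSucc_lt_last i).ne]

theorem Matrix.charpoly_eq_mul_of_castSucc_last_eq_zero {R : Type*} [CommRing R]
    (M : Matrix (Fin (n + 1)) (Fin (n + 1)) R)
    (hcol : ∀ i : Fin n, M i.castSucc (Fin.last n) = 0) :
    M.charpoly =
      (M.submatrix Fin.castSucc Fin.castSucc).charpoly * (X - C (M (Fin.last n) (Fin.last n))) := by
  set c := M (Fin.last n) (Fin.last n)
  have hblocks : M.reindex finSumFinEquiv.symm finSumFinEquiv.symm =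
      fromBlocks (M.submatrix Fin.castSucc Fin.castSucc) 0
        (of fun _ j => M (Fin.last n) j.castSucc) (of fun _ _ : Fin 1 => c) := by
    ext (i | i) (j | j)
    · rfl
    · rw [Fin.fin_one_eq_zero j]
      exact hcol i
    · rw [Fin.fin_one_eq_zero i]
      rfl
    · rw [Fin.fin_one_eq_zero i, Fin.fin_one_eq_zero j]
      rfl
  have hc : (of fun _ _ : Fin 1 => c).charpoly = X - C c := by
    rw [charpoly, det_unique, charmatrix_apply_eq]
    rfl
  rw [← charpoly_reindex finSumFinEquiv.symm, hblocks, charpoly_fromBlocks_zero₁₂, hc]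

theorem isEigenvalue_iff_of_castSucc_last_eq_zero (M : Matrix (Fin (n + 1)) (Fin (n + 1)) ℝ)
    (hcol : ∀ i : Fin n, M i.castSucc (Fin.last n) = 0) (μ : ℂ) :
    IsEigenvalue M μ ↔ IsEigenvalue (M.submatrix Fin.castSucc Fin.castSucc) μ ∨
      μ = M (Fin.last n) (Fin.last n) := by
  simp only [IsEigenvalue, M.charpoly_eq_mul_of_castSucc_last_eq_zero hcol, Polynomial.map_mul,
    IsRoot, eval_mul, mul_eq_zero, Polynomial.map_sub, map_X, map_C, eval_sub, eval_X, eval_C,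
    sub_eq_zero, Complex.coe_algebraMap]

theorem linStable_iff_of_castSucc_last_eq_zero (M : Matrix (Fin (n + 1)) (Fin (n + 1)) ℝ)
    (hcol : ∀ i : Fin n, M i.castSucc (Fin.last n) = 0)
    (hneg : M (Fin.last n) (Fin.last n) < 0) :
    LinStable M ↔ LinStable (M.submatrix Fin.castSucc Fin.castSucc) := by
  simp only [LinStable, isEigenvalue_iff_of_castSucc_last_eq_zero M hcol, or_imp, forall_and,
    forall_eq, Complex.ofReal_re, hneg, and_true]

variable (α : ℝ) (p : Finset (Fin (n + 1)) → ℝ) (v : Fin n → ℝ)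

theorem sum_rpow_snoc_zero_map (A : Finset (Fin n)) :
    ∑ j ∈ A.map Fin.castSuccEmb, (Fin.snoc v 0 : Fin (n + 1) → ℝ) j ^ α = ∑ j ∈ A, v j ^ α := by
  simp

theorem sum_rpow_snoc_zero_insert_last (hα : α ≠ 0) (A : Finset (Fin n)) :
    ∑ j ∈ insert (Fin.last n) (A.map Fin.castSuccEmb), (Fin.snoc v 0 : Fin (n + 1) → ℝ) j ^ α =
      ∑ j ∈ A, v j ^ α := by
  rw [sum_insert (Fin.last_notMem_map_castSuccEmb A), Fin.snoc_last, Real.zero_rpow hα, zero_add,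
    sum_rpow_snoc_zero_map]

theorem reduceP_eq_add (h0 : p ∅ = 0) (hlast : p {Fin.last n} = 0) (A : Finset (Fin n)) :
    reduceP n p A =
      p (A.map Fin.castSuccEmb) + p (insert (Fin.last n) (A.map Fin.castSuccEmb)) := by
  unfold reduceP
  split_ifs with hA
  · simp [hA, h0, hlast]
  · rfl

theorem isWarmWeight_reduceP (hp : IsWarmWeight p) (hlast : p {Fin.last n} = 0) :
    IsWarmWeight (reduceP n p) := by
  obtain ⟨h0, hbound, hsum⟩ := hp
  have hnonneg (A : Finset (Fin n)) : 0 ≤ reduceP n p A := by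
    rw [reduceP_eq_add p h0 hlast]
    exact add_nonneg (hbound _).1 (hbound _).1
  have hsum_reduced : ∑ A, reduceP n p A = 1 := by
    simp_rw [reduceP_eq_add p h0 hlast]
    rw [← sum_finset_fin_succ, hsum]
  refine ⟨if_pos rfl, fun A => ⟨hnonneg A, ?_⟩, hsum_reduced⟩
  exact hsum_reduced ▸ single_le_sum (fun B _ => hnonneg B) (mem_univ A)

theorem sum_filter_mul_snoc_zero (hα : α ≠ 0)
    {P : Finset (Fin (n + 1)) → Prop} [DecidablePred P]
    {P' : Finset (Fin n) → Prop} [DecidablePred P']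
    (hmap : ∀ A, P (A.map Fin.castSuccEmb) ↔ P' A)
    (hinsert : ∀ A, P (insert (Fin.last n) (A.map Fin.castSuccEmb)) ↔ P' A)
    (hne : ∀ A, P' A → A.Nonempty) (c : ℝ → ℝ) :
    ∑ A ∈ univ.filter P, p A * c (∑ j ∈ A, (Fin.snoc v 0 : Fin (n + 1) → ℝ) j ^ α) =
      ∑ A ∈ univ.filter P', reduceP n p A * c (∑ j ∈ A, v j ^ α) := by
  rw [sum_filter, sum_filter, sum_finset_fin_succ]
  refine sum_congr rfl fun A _ => ?_
  rw [sum_rpow_snoc_zero_map, sum_rpow_snoc_zero_insert_last α v hα]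
  simp only [hmap, hinsert]
  split_ifs with h
  · rw [reduceP, if_neg (hne A h).ne_empty]
    ring
  · rw [add_zero]

theorem warmF_snoc_zero_castSucc (hα : α ≠ 0) (i : Fin n) :
    warmF α p (Fin.snoc v 0) i.castSucc = warmF α (reduceP n p) v i := by
  simp only [warmF, Fin.snoc_castSucc, mul_div_assoc]
  rw [sum_filter_mul_snoc_zero α p v hα (fun A => mem_map' Fin.castSuccEmb)
    (Fin.castSucc_mem_insert_last_map_iff i) (fun _ h => ⟨i, h⟩) (v i ^ α / ·)]

theorem warmF_snoc_zero_last (hα : α ≠ 0) : warmF α p (Fin.snoc v 0) (Fin.last n) = 0 := by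
  simp [warmF, Real.zero_rpow hα]

theorem warmF_snoc_zero_eq_zero_iff (hα : α ≠ 0) :
    (∀ i, warmF α p (Fin.snoc v 0) i = 0) ↔ ∀ i, warmF α (reduceP n p) v i = 0 := by
  simp only [Fin.forall_fin_succ', warmF_snoc_zero_castSucc α p v hα,
    warmF_snoc_zero_last α p v hα, and_true]

theorem warmD_snoc_zero_submatrix (hα : α ≠ 0) :
    (warmD α p (Fin.snoc v 0)).submatrix Fin.castSucc Fin.castSucc = warmD α (reduceP n p) v := by
  ext i k
  simp only [Matrix.submatrix_apply, warmD, Matrix.of_apply, Fin.castSucc_inj, Fin.snoc_castSucc]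
  split_ifs with hik
  · subst hik
    simp only [mul_div_assoc]
    rw [sum_filter_mul_snoc_zero α p v hα (fun A => mem_map' Fin.castSuccEmb)
      (Fin.castSucc_mem_insert_last_map_iff i) (fun _ h => ⟨i, h⟩)
      (fun S => (S - v i ^ α) / S ^ 2)]
  · simp only [div_eq_mul_inv]
    rw [sum_filter_mul_snoc_zero α p v hα (P := fun A => i.castSucc ∈ A ∧ k.castSucc ∈ A)
      (P' := fun A => i ∈ A ∧ k ∈ A)
      (fun A => and_congr (mem_map' Fin.castSuccEmb) (mem_map' Fin.castSuccEmb))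
      (fun A => and_congr (Fin.castSucc_mem_insert_last_map_iff i A)
        (Fin.castSucc_mem_insert_last_map_iff k A))
      (fun _ h => ⟨i, h.1⟩) (fun S => (S ^ 2)⁻¹)]

theorem warmD_snoc_zero_castSucc_last (hα : α ≠ 1) (i : Fin n) :
    warmD α p (Fin.snoc v 0) i.castSucc (Fin.last n) = 0 := by
  simp [warmD, (Fin.castSucc_lt_last i).ne, Real.zero_rpow (sub_ne_zero.mpr hα)]

theorem warmD_snoc_zero_last_last (hα : α ≠ 1) :
    warmD α p (Fin.snoc v 0) (Fin.last n) (Fin.last n) = -1 := by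
  simp [warmD, Real.zero_rpow (sub_ne_zero.mpr hα)]

theorem linStable_warmD_snoc_zero_iff (hα₀ : α ≠ 0) (hα₁ : α ≠ 1) :
    LinStable (warmD α p (Fin.snoc v 0)) ↔ LinStable (warmD α (reduceP n p) v) := by
  rw [linStable_iff_of_castSucc_last_eq_zero _ (warmD_snoc_zero_castSucc_last α p v hα₁)
      (by rw [warmD_snoc_zero_last_last α p v hα₁]; norm_num),
    warmD_snoc_zero_submatrix α p v hα₀]

end

theorem warm_stability_reduction_general (n : ℕ) (α : ℝ) (hα : 1 < α)
    (p : Finset (Fin (n + 1)) → ℝ) (hp : IsWarmWeight p)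
    (hlast : p {Fin.last n} = 0)
    (v : Fin n → ℝ) :
    IsWarmWeight (reduceP n p) ∧
    ((∀ i, warmF α p (Fin.snoc v 0) i = 0) ↔ (∀ i, warmF α (reduceP n p) v i = 0)) ∧
    (((∀ i, warmF α p (Fin.snoc v 0) i = 0) ∧ LinStable (warmD α p (Fin.snoc v 0))) ↔
      ((∀ i, warmF α (reduceP n p) v i = 0) ∧ LinStable (warmD α (reduceP n p) v))) := by
  have hα₀ : α ≠ 0 := (zero_lt_one.trans hα).ne'
  have hequilibrium := warmF_snoc_zero_eq_zero_iff α p v hα₀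
  exact ⟨isWarmWeight_reduceP p hp hlast, hequilibrium,
    and_congr hequilibrium (linStable_warmD_snoc_zero_iff α p v hα₀ hα.ne')⟩

/-- **Stability reduction.** If `p` gives no mass to the singleton of the last colour,
then a vector with last coordinate `0` is an equilibrium (resp. a linearly stable
equilibrium) for `p` iff the truncated vector is one for the reduced weight `p'`. -/
theorem warm_stability_reduction (n : ℕ) (hn : 1 ≤ n) (α : ℝ) (hα : 1 < α)
    (p : Finset (Fin (n + 1)) → ℝ) (hp : IsWarmWeight p)
    (hlast : p {Fin.last n} = 0)
    (v : Fin n → ℝ) (hv : InSimplex v) :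
    IsWarmWeight (reduceP n p) ∧
    ((∀ i, warmF α p (Fin.snoc v 0) i = 0) ↔ (∀ i, warmF α (reduceP n p) v i = 0)) ∧
    (((∀ i, warmF α p (Fin.snoc v 0) i = 0) ∧ LinStable (warmD α p (Fin.snoc v 0))) ↔
      ((∀ i, warmF α (reduceP n p) v i = 0) ∧ LinStable (warmD α (reduceP n p) v))) :=
  warm_stability_reduction_general n α hα p hp hlast v
end
end

section
/- Let v ∈ Δ_n be an equilibrium (F(v) = 0) with v_i > 0 for every i ∈ [n]. Then: (1) for every A ⊆ [n], Σ_{k∈A} v_k ≥ p(A); and (2) for every i ∈ [n], v_i ≥ (Σ_{A ∋ i, p(A) > 0} (p(A)/|A|)^{1−α})^{1/(1−α)}. In particular, there exists ε > 0, depending only on n, α and p, such that every equilibrium with all coordinates positive satisfies v_i ≥ ε for all i. -/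
/-!
At an equilibrium every coordinate is a sum of shares: `v_k = Σ_{A ∋ k} p(A) v_k^α / Σ_{j∈A} v_j^α`.
The `A`-shares of the coordinates in `A` add up to `p(A)`, which gives `p(A) ≤ Σ_{k∈A} v_k`.
Feeding this into the power-mean inequality `(Σ_{j∈A} v_j)^α ≤ |A|^{α-1} Σ_{j∈A} v_j^α` bounds
each share of `v_i` by `(p(A)/|A|)^{1-α} v_i^α`, so `v_i^{1-α} ≤ Σ_{A ∋ i, p(A) > 0} (p(A)/|A|)^{1-α}`;
raising to the negative power `1/(1-α)` gives the coordinate bound, which depends only on `α` and `p`.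
-/

open Finset

noncomputable section

open Real Filter Topology

lemma exists_pos_forall_le_of_pos {ι : Type*} [Finite ι] {b : ι → ℝ} (hb : ∀ i, 0 < b i) :
    ∃ ε, 0 < ε ∧ ∀ i, ε ≤ b i :=
  have hε : ∀ᶠ ε in 𝓝[>] (0 : ℝ), 0 < ε := self_mem_nhdsWithin
  (hε.and (eventually_all.2 fun i => (eventually_le_nhds (hb i)).filter_mono
    nhdsWithin_le_nhds)).exists

lemma le_rpow_one_sub_mul_sum_rpow {ι : Type*} {s : Finset ι} {f : ι → ℝ} {c α : ℝ}
    (hα : 1 ≤ α) (hf : ∀ i ∈ s, 0 ≤ f i) (hc : 0 < c) (hcs : c ≤ ∑ i ∈ s, f i) :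
    c ≤ (c / s.card) ^ (1 - α) * ∑ i ∈ s, f i ^ α := by
  have power_mean : c ^ α ≤ (s.card : ℝ) ^ (α - 1) * ∑ i ∈ s, f i ^ α :=
    (rpow_le_rpow hc.le hcs (by linarith)).trans (rpow_sum_le_const_mul_sum_rpow_of_nonneg s hα hf)
  calc c = c ^ (1 - α) * c ^ α := by rw [← rpow_add hc]; norm_num
    _ ≤ c ^ (1 - α) * ((s.card : ℝ) ^ (α - 1) * ∑ i ∈ s, f i ^ α) := by gcongr
    _ = (c / s.card) ^ (1 - α) * ∑ i ∈ s, f i ^ α := by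
      rw [div_rpow hc.le (Nat.cast_nonneg _), div_eq_mul_inv, ← rpow_neg (Nat.cast_nonneg _),
        neg_sub]
      ring

lemma rpow_one_sub_le_of_le_mul_rpow {x T α : ℝ} (hx : 0 < x) (h : x ≤ T * x ^ α) :
    x ^ (1 - α) ≤ T := by
  rwa [rpow_sub hx, rpow_one, div_le_iff₀ (rpow_pos_of_pos hx α)]

def warmBoundSum {ι : Type*} [Fintype ι] [DecidableEq ι] (α : ℝ)
    (p : Finset ι → ℝ) (i : ι) : ℝ :=
  ∑ A ∈ univ.filter (fun A : Finset ι => i ∈ A ∧ 0 < p A), (p A / (A.card : ℝ)) ^ ((1 : ℝ) - α)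

section Equilibrium

variable {ι : Type*} [Fintype ι] [DecidableEq ι] {α : ℝ} {p : Finset ι → ℝ} {v : ι → ℝ}

lemma eq_sum_of_warmF_eq_zero {i : ι} (h : warmF α p v i = 0) :
    v i = ∑ A ∈ univ.filter (fun A : Finset ι => i ∈ A), p A * v i ^ α / ∑ j ∈ A, v j ^ α := by
  unfold warmF at h
  linarith

lemma weight_le_sum_of_warmF_eq_zero (hp_empty : p ∅ = 0) (hp : ∀ A, 0 ≤ p A)
    (heq : ∀ i, warmF α p v i = 0) (hpos : ∀ i, 0 < v i) (A : Finset ι) :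
    p A ≤ ∑ k ∈ A, v k := by
  rcases A.eq_empty_or_nonempty with rfl | hA
  · simp [hp_empty]
  have hS : 0 < ∑ j ∈ A, v j ^ α := sum_pos (fun j _ => rpow_pos_of_pos (hpos j) α) hA
  have shares_sum : ∑ k ∈ A, p A * v k ^ α / ∑ j ∈ A, v j ^ α = p A := by
    rw [← sum_div, ← mul_sum, mul_div_assoc, div_self hS.ne', mul_one]
  rw [← shares_sum]
  refine sum_le_sum fun k hk => ?_
  conv_rhs => rw [eq_sum_of_warmF_eq_zero (heq k)]
  exact single_le_sum (f := fun B => p B * v k ^ α / ∑ j ∈ B, v j ^ α)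
    (fun B _ => div_nonneg (mul_nonneg (hp B) (rpow_nonneg (hpos k).le α))
      (sum_nonneg fun j _ => rpow_nonneg (hpos j).le α)) (mem_filter.2 ⟨mem_univ A, hk⟩)

lemma eq_sum_pos_weight_of_warmF_eq_zero (hp : ∀ A, 0 ≤ p A) {i : ι} (h : warmF α p v i = 0) :
    v i = ∑ A ∈ univ.filter (fun A : Finset ι => i ∈ A ∧ 0 < p A),
      p A * v i ^ α / ∑ j ∈ A, v j ^ α := by
  rw [← filter_filter, sum_filter_of_ne (f := fun A => p A * v i ^ α / ∑ j ∈ A, v j ^ α)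
    fun A _ hA => (hp A).lt_of_ne' (left_ne_zero_of_mul (div_ne_zero_iff.1 hA).1)]
  exact eq_sum_of_warmF_eq_zero h

lemma rpow_one_sub_le_warmBoundSum (hα : 1 ≤ α) (hp_empty : p ∅ = 0) (hp : ∀ A, 0 ≤ p A)
    (heq : ∀ i, warmF α p v i = 0) (hpos : ∀ i, 0 < v i) (i : ι) :
    v i ^ (1 - α) ≤ warmBoundSum α p i := by
  refine rpow_one_sub_le_of_le_mul_rpow (hpos i) ?_
  calc v i = ∑ A ∈ univ.filter (fun A : Finset ι => i ∈ A ∧ 0 < p A),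
        p A / (∑ j ∈ A, v j ^ α) * v i ^ α := by
        conv_lhs => rw [eq_sum_pos_weight_of_warmF_eq_zero hp (heq i)]
        exact sum_congr rfl fun A _ => by ring
    _ ≤ ∑ A ∈ univ.filter (fun A : Finset ι => i ∈ A ∧ 0 < p A),
        (p A / (A.card : ℝ)) ^ (1 - α) * v i ^ α := by
        refine sum_le_sum fun A hA => ?_
        obtain ⟨hiA, hpA⟩ := (mem_filter.1 hA).2
        have hS : 0 < ∑ j ∈ A, v j ^ α :=
          sum_pos (fun j _ => rpow_pos_of_pos (hpos j) α) ⟨i, hiA⟩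
        refine mul_le_mul_of_nonneg_right ?_ (rpow_nonneg (hpos i).le α)
        rw [div_le_iff₀ hS]
        exact le_rpow_one_sub_mul_sum_rpow hα (fun j _ => (hpos j).le) hpA
          (weight_le_sum_of_warmF_eq_zero hp_empty hp heq hpos A)
    _ = warmBoundSum α p i * v i ^ α := by rw [warmBoundSum, sum_mul]

lemma warmBoundSum_pos (hα : 1 ≤ α) (hp_empty : p ∅ = 0) (hp : ∀ A, 0 ≤ p A)
    (heq : ∀ i, warmF α p v i = 0) (hpos : ∀ i, 0 < v i) (i : ι) :
    0 < warmBoundSum α p i :=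
  (rpow_pos_of_pos (hpos i) _).trans_le (rpow_one_sub_le_warmBoundSum hα hp_empty hp heq hpos i)

lemma warmBoundSum_rpow_le (hα : 1 < α) (hp_empty : p ∅ = 0) (hp : ∀ A, 0 ≤ p A)
    (heq : ∀ i, warmF α p v i = 0) (hpos : ∀ i, 0 < v i) (i : ι) :
    warmBoundSum α p i ^ (1 / (1 - α)) ≤ v i := by
  rw [one_div, rpow_inv_le_iff_of_neg (warmBoundSum_pos hα.le hp_empty hp heq hpos i) (hpos i)
    (by linarith)]
  exact rpow_one_sub_le_warmBoundSum hα.le hp_empty hp heq hpos i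

end Equilibrium

theorem equilibrium_coordinate_lower_bounds_general (n : ℕ) (α : ℝ) (hα : 1 < α)
    (p : Finset (Fin n) → ℝ) (hp : IsWarmWeight p)
    (v : Fin n → ℝ)
    (heq : ∀ i, warmF α p v i = 0) (hpos : ∀ i, 0 < v i) :
    (∀ A : Finset (Fin n), p A ≤ ∑ k ∈ A, v k) ∧
    (∀ i : Fin n,
      ((∑ A ∈ Finset.univ.filter (fun A : Finset (Fin n) => i ∈ A ∧ 0 < p A),
          (p A / (A.card : ℝ)) ^ ((1 : ℝ) - α)) ^ (1 / (1 - α))) ≤ v i) ∧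
    (∃ ε : ℝ, 0 < ε ∧ ∀ w : Fin n → ℝ, InSimplex w → (∀ i, warmF α p w i = 0) →
      (∀ i, 0 < w i) → ∀ i, ε ≤ w i) := by
  obtain ⟨hp_empty, hp_bounds, -⟩ := hp
  have hp_nonneg : ∀ A, 0 ≤ p A := fun A => (hp_bounds A).1
  obtain ⟨ε, hε, hε_le⟩ := exists_pos_forall_le_of_pos fun i =>
    rpow_pos_of_pos (warmBoundSum_pos hα.le hp_empty hp_nonneg heq hpos i) (1 / (1 - α))
  refine ⟨weight_le_sum_of_warmF_eq_zero hp_empty hp_nonneg heq hpos,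
    warmBoundSum_rpow_le hα hp_empty hp_nonneg heq hpos, ε, hε, ?_⟩
  intro w _ hweq hwpos i
  exact (hε_le i).trans (warmBoundSum_rpow_le hα hp_empty hp_nonneg hweq hwpos i)

/-- **Lower bounds for fully supported equilibria.** If `v` is an equilibrium with all
coordinates positive, then `Σ_{k∈A} v_k ≥ p(A)` for every `A`, and
`v_i ≥ (Σ_{A∋i, p(A)>0} (p(A)/|A|)^{1−α})^{1/(1−α)}`; in particular there is
`ε > 0`, depending only on `n`, `α`, `p`, bounding all fully supported equilibria
below. -/
theorem equilibrium_coordinate_lower_bounds (n : ℕ) (hn : 1 ≤ n) (α : ℝ) (hα : 1 < α)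
    (p : Finset (Fin n) → ℝ) (hp : IsWarmWeight p)
    (v : Fin n → ℝ) (hv : InSimplex v)
    (heq : ∀ i, warmF α p v i = 0) (hpos : ∀ i, 0 < v i) :
    (∀ A : Finset (Fin n), p A ≤ ∑ k ∈ A, v k) ∧
    (∀ i : Fin n,
      ((∑ A ∈ Finset.univ.filter (fun A : Finset (Fin n) => i ∈ A ∧ 0 < p A),
          (p A / (A.card : ℝ)) ^ ((1 : ℝ) - α)) ^ (1 / (1 - α))) ≤ v i) ∧
    (∃ ε : ℝ, 0 < ε ∧ ∀ w : Fin n → ℝ, InSimplex w → (∀ i, warmF α p w i = 0) →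
      (∀ i, 0 < w i) → ∀ i, ε ≤ w i) :=
  equilibrium_coordinate_lower_bounds_general n α hα p hp v heq hpos

end
end

section
/- Let v ∈ Δ_n be an equilibrium of the WARM star graph with n ≥ 2 edges. Then 1/(n+1) < v_i < 2/(n+1) for every i ∈ [n], and the set of values {v_1, …, v_n} has at most two distinct elements; i.e., either all coordinates of v are equal (to 1/n), or there exist reals v > u and an integer 1 ≤ k ≤ n−1 such that, after permuting coordinates, v = (v, …, v, u, …, u) with v appearing k times and u appearing n−k times. -/
open Finset

noncomputable section

/-- The WARM star graph weight on `n` edges. -/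
def starP (n : ℕ) : Finset (Fin n) → ℝ :=
  fun A =>
    if A = Finset.univ then 1 / ((n : ℝ) + 1)
    else if A.card = 1 then 1 / ((n : ℝ) + 1)
    else 0

/-!
Let `S = ∑ j, v j ^ α`. For the star weight the equilibrium equation reads
`v i = (v i ^ α / v i ^ α + v i ^ α / S) / (n + 1)`, where `0 ^ α / 0 ^ α = 0`, so zero coordinates
satisfy it too. Summing over `i` gives `1 = (#{i | v i ≠ 0} + 1) / (n + 1)`, so every coordinate is
positive and `v i = (1 + v i ^ α / S) / (n + 1)` with `0 < v i ^ α / S < 1`, whence the bounds.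
This says that every `v i` is a root of `x ^ α = (n + 1) S x - S`; since `x ↦ x ^ α` is strictly
convex, it meets that line at most twice, so `v` takes at most two values.
-/

theorem StrictConvexOn.apply_ne_affine_between {s : Set ℝ} {f : ℝ → ℝ}
    (hf : StrictConvexOn ℝ s f) {a b x y z : ℝ} (hx : x ∈ s) (hz : z ∈ s) (hxy : x < y)
    (hyz : y < z) (hfx : f x = a * x + b) (hfz : f z = a * z + b) : f y ≠ a * y + b := by
  intro hfy
  have hslope := hf.slope_strict_mono_adjacent hx hz hxy hyz
  rw [hfx, hfy, hfz] at hslope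
  have hleft : (a * y + b - (a * x + b)) / (y - x) = a := by
    field_simp [sub_ne_zero.2 hxy.ne']
    ring
  have hright : (a * z + b - (a * y + b)) / (z - y) = a := by
    field_simp [sub_ne_zero.2 hyz.ne']
    ring
  rw [hleft, hright] at hslope
  exact hslope.false

theorem Fin.iff_lt_card_filter_of_antitone {n : ℕ} {q : Fin n → Prop} [DecidablePred q]
    (hq : ∀ ⦃i j⦄, i ≤ j → q j → q i) (i : Fin n) : q i ↔ (i : ℕ) < #{j | q j} := by
  constructor
  · intro hi
    calc (i : ℕ) < #(Iic i) := by simp [Fin.card_Iic]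
      _ ≤ #{j | q j} := card_le_card fun j hj => by simpa using hq (mem_Iic.1 hj) hi
  · intro hlt
    by_contra hi
    have hsub : #{j | q j} ≤ #(Iio i) := card_le_card fun j hj =>
      mem_Iio.2 (lt_of_not_ge fun hij => hi (hq hij (by simpa using hj)))
    rw [Fin.card_Iio] at hsub
    omega

theorem Fin.exists_perm_iff_lt_card {n : ℕ} (p : Fin n → Prop) [DecidablePred p] :
    ∃ σ : Equiv.Perm (Fin n), ∀ i, p (σ i) ↔ (i : ℕ) < #{j | p j} := by
  -- sorting by `¬ p i` (with `False < True`) puts the `i` with `p i` first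
  let σ := Tuple.sort fun i => ¬ p i
  have hcard : #{j | p (σ j)} = #{j | p j} := by
    simp only [card_filter]
    exact Equiv.sum_comp σ fun j => if p j then 1 else 0
  refine ⟨σ, fun i => hcard ▸ Fin.iff_lt_card_filter_of_antitone (q := (p <| σ ·))
    (fun j k hjk hk => ?_) i⟩
  have := Tuple.monotone_sort (fun i => ¬ p i) hjk
  simp only [Function.comp_apply, le_Prop_eq] at this
  tauto

theorem Fin.forall_eq_or_exists_perm_eq_ite {α : Type*} [LinearOrder α] {n : ℕ} {v : Fin n → α}
    (h : ∀ i j k, v i < v j → v j < v k → False) :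
    (∀ i j, v i = v j) ∨ ∃ (a b : α) (k : ℕ) (σ : Equiv.Perm (Fin n)), b < a ∧ 1 ≤ k ∧
      k ≤ n - 1 ∧ ∀ i : Fin n, v (σ i) = if (i : ℕ) < k then a else b := by
  by_cases hconst : ∀ i j, v i = v j
  · exact Or.inl hconst
  right
  obtain ⟨i₀, -, -⟩ : ∃ i j, v i ≠ v j := by simpa using hconst
  have : Nonempty (Fin n) := ⟨i₀⟩
  obtain ⟨imax, hmax⟩ := Finite.exists_max v
  obtain ⟨imin, hmin⟩ := Finite.exists_min v
  have htwo : ∀ i, v i = v imax ∨ v i = v imin := fun i => by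
    by_contra! hi
    exact h imin i imax ((hmin i).lt_of_ne hi.2.symm) ((hmax i).lt_of_ne hi.1)
  have hlt : v imin < v imax := (hmin imax).lt_of_ne fun he => by
    have hall : ∀ i, v i = v imax := fun i => (htwo i).elim id (·.trans he)
    exact hconst fun i j => (hall i).trans (hall j).symm
  obtain ⟨σ, hσ⟩ := Fin.exists_perm_iff_lt_card (v · = v imax)
  refine ⟨v imax, v imin, #{j | v j = v imax}, σ, hlt, ?_, ?_, fun i => ?_⟩
  · exact card_pos.2 ⟨imax, by simp⟩
  · have := card_lt_univ_of_notMem (s := {j | v j = v imax}) (x := imin) (by simpa using hlt.ne)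
    rw [Fintype.card_fin] at this
    omega
  · split_ifs with hi
    · exact (hσ i).2 hi
    · exact (htwo (σ i)).resolve_left fun h => hi ((hσ i).1 h)

theorem warmF_starP {n : ℕ} (hn : 2 ≤ n) (α : ℝ) (v : Fin n → ℝ) (i : Fin n) :
    warmF α (starP n) v i = -v i + (v i ^ α / v i ^ α + v i ^ α / ∑ j, v j ^ α) / (n + 1) := by
  have hne : ({i} : Finset (Fin n)) ≠ univ := fun h => by
    have := congrArg Finset.card h
    simp only [card_singleton, card_univ, Fintype.card_fin] at this
    omega
  have hsub : {{i}, univ} ⊆ ({A | i ∈ A} : Finset (Finset (Fin n))) := by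
    simp [insert_subset_iff]
  have hzero : ∀ A ∈ ({A | i ∈ A} : Finset (Finset (Fin n))), A ∉ ({{i}, univ} : Finset _) →
      starP n A * v i ^ α / ∑ j ∈ A, v j ^ α = 0 := by
    intro A hA hA'
    simp only [mem_filter, mem_univ, true_and] at hA
    simp only [mem_insert, mem_singleton, not_or] at hA'
    have hcard : A.card ≠ 1 := fun h1 => by
      obtain ⟨c, rfl⟩ := card_eq_one.1 h1
      exact hA'.1 (by rw [mem_singleton.1 hA])
    simp [starP, hA'.2, hcard]
  unfold warmF
  rw [← sum_subset hsub hzero, sum_pair hne]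
  simp [starP, hne]
  ring

theorem InSimplex.forall_pos_of_eq {ι : Type*} [Fintype ι] {v : ι → ℝ} (hv : InSimplex v)
    {α : ℝ} (hα : α ≠ 0)
    (h : ∀ i, v i = (v i ^ α / v i ^ α + v i ^ α / ∑ j, v j ^ α) / (Fintype.card ι + 1)) :
    ∀ i, 0 < v i := by
  classical
  obtain ⟨hv0, hv1⟩ := hv
  set S := ∑ j, v j ^ α
  obtain ⟨i₀, -, hi₀⟩ := exists_lt_of_sum_lt (show ∑ _ : ι, (0 : ℝ) < ∑ i, v i by simp [hv1])
  have hS : 0 < S := sum_pos' (fun j _ => Real.rpow_nonneg (hv0 j) α)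
    ⟨i₀, mem_univ _, Real.rpow_pos_of_pos hi₀ α⟩
  have hself : ∀ i, v i ^ α / v i ^ α = if v i ≠ 0 then 1 else 0 := fun i => by
    split_ifs with hi
    · exact div_self (Real.rpow_pos_of_pos ((hv0 i).lt_of_ne' hi) α).ne'
    · simp [not_not.1 hi, Real.zero_rpow hα]
  have hcount : (#{i | v i ≠ 0} : ℝ) = Fintype.card ι := by
    have hsum : ∑ i, v i = ∑ i, (v i ^ α / v i ^ α + v i ^ α / S) / (Fintype.card ι + 1) :=
      sum_congr rfl fun i _ => h i
    rw [hv1, ← sum_div, sum_add_distrib, ← sum_div, div_self hS.ne', eq_div_iff (by positivity),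
      one_mul] at hsum
    rw [natCast_card_filter, ← sum_congr rfl fun i _ => hself i]
    linarith
  have hall : #{i | v i ≠ 0} = #(univ : Finset ι) := by
    rw [card_univ]
    exact_mod_cast hcount
  intro i
  exact (hv0 i).lt_of_ne' (by simpa using card_filter_eq_iff.1 hall i (mem_univ i))

theorem star_equilibrium_eq {n : ℕ} (hn : 2 ≤ n) {α : ℝ} (hα : α ≠ 0) {v : Fin n → ℝ}
    (hv : InSimplex v) (heq : ∀ i, warmF α (starP n) v i = 0) (i : Fin n) :
    0 < v i ∧ v i = (1 + v i ^ α / ∑ j, v j ^ α) / (n + 1) := by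
  have hfix : ∀ i, v i = (v i ^ α / v i ^ α + v i ^ α / ∑ j, v j ^ α) / (n + 1) := fun i => by
    linarith [warmF_starP hn α v i, heq i]
  have hpos := hv.forall_pos_of_eq hα (by simpa using hfix) i
  refine ⟨hpos, ?_⟩
  simpa only [div_self (Real.rpow_pos_of_pos hpos α).ne'] using hfix i

theorem div_sum_mem_Ioo_of_pos {ι : Type*} [Fintype ι] [Nontrivial ι] {w : ι → ℝ}
    (hw : ∀ i, 0 < w i) (i : ι) : w i / ∑ j, w j ∈ Set.Ioo 0 1 := by
  obtain ⟨j, hji⟩ := exists_ne i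
  have hlt : w i < ∑ j, w j :=
    single_lt_sum hji (mem_univ i) (mem_univ j) (hw j) fun k _ _ => (hw k).le
  exact ⟨div_pos (hw i) ((hw i).trans hlt), (div_lt_one ((hw i).trans hlt)).2 hlt⟩

/-- **Structure of star-graph equilibria.** Every equilibrium of the WARM star graph
with `n ≥ 2` edges has all coordinates in `(1/(n+1), 2/(n+1))`, and takes at most two
distinct values: either all coordinates equal `1/n`, or after a permutation it equals
`(v,…,v,u,…,u)` with `v > u`, `v` occurring `k` times for some `1 ≤ k ≤ n−1`. -/
theorem star_equilibria_structure (n : ℕ) (hn : 2 ≤ n) (α : ℝ) (hα : 1 < α)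
    (v : Fin n → ℝ) (hv : InSimplex v) (heq : ∀ i, warmF α (starP n) v i = 0) :
    (∀ i, 1 / ((n : ℝ) + 1) < v i ∧ v i < 2 / ((n : ℝ) + 1)) ∧
    ((∀ i, v i = 1 / (n : ℝ)) ∨
      ∃ (a b : ℝ) (k : ℕ) (σ : Equiv.Perm (Fin n)), b < a ∧ 1 ≤ k ∧ k ≤ n - 1 ∧
        ∀ i : Fin n, v (σ i) = if (i : ℕ) < k then a else b) := by
  have hfix := star_equilibrium_eq hn (by linarith) hv heq
  set S := ∑ j, v j ^ α
  have : Nontrivial (Fin n) := Fin.nontrivial_iff_two_le.2 hn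
  have hshare : ∀ i, v i ^ α / S ∈ Set.Ioo 0 1 :=
    div_sum_mem_Ioo_of_pos fun i => Real.rpow_pos_of_pos (hfix i).1 α
  refine ⟨fun i => ?_, ?_⟩
  · rw [(hfix i).2]
    constructor <;> gcongr <;> linarith [(hshare i).1, (hshare i).2]
  have hline : ∀ i, v i ^ α = (n + 1) * S * v i + -S := fun i => by
    have hS : S ≠ 0 := fun h => by simpa [h] using (hshare i).1
    have := (hfix i).2
    field_simp at this
    linear_combination -this
  refine (Fin.forall_eq_or_exists_perm_eq_ite fun i j k hij hjk =>
    (strictConvexOn_rpow hα).apply_ne_affine_between (hfix i).1.le (hfix k).1.le hij hjk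
      (hline i) (hline k) (hline j)).imp_left fun hconst i => ?_
  have hsum : ∑ j, v j = n * v i := by simp [hconst _ i]
  rw [hv.2] at hsum
  field_simp
  linarith

end
end

section
/- Consider the WARM star graph with n ≥ 2 edges, and suppose that the vector w = (v, …, v, u, …, u) (with v in the first k coordinates and u in the remaining n−k coordinates, 1 ≤ k ≤ n−1, v > u > 0, k·v + (n−k)·u = 1) is an equilibrium. Let η = k·v^α + (n−k)·u^α and ξ = α/((n+1)·η²). Then w is linearly stable if and only if either (k = 1 and ξ·(u·v)^{α−1} < 1) or (k ≥ 2 and v < α/((α−1)(n+1))); and w is critical if equality holds in the corresponding condition. -/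
open Finset

noncomputable section

/-- `ξ = α/((n+1)η²)` where `η = k aᵅ + (n−k) bᵅ`. -/
def starXi (n : ℕ) (α a b : ℝ) (k : ℕ) : ℝ :=
  α / (((n : ℝ) + 1) * ((k : ℝ) * a ^ α + ((n : ℝ) - (k : ℝ)) * b ^ α) ^ 2)


/-! At an equilibrium `w` of the star graph, with `η = ∑ wⱼ^α` and `ξ = α / ((n + 1) η²)`, the
Jacobian is `diag (ξ η wᵢ^(α-1) - 1) - ξ wᵅ (w^(α-1))ᵀ`, a diagonal matrix minus a rank-one matrix.
For the two-valued `w` the matrix determinant lemma yields the eigenvalues `ξ η a^(α-1) - 1`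
(multiplicity `k - 1`), `ξ η b^(α-1) - 1` (multiplicity `n - k - 1`), `-1` and `ξ (ab)^(α-1) - 1`.
Subtracting the equilibrium equations `x^α = η ((n + 1) x - 1)` for `x = a, b` shows that
`(n + 1) η` is the slope of the secant of the strictly convex `x ↦ x^α` over `[b, a]`, so it lies
strictly between the derivatives at `b` and at `a`. Hence the first eigenvalue is positive (and
`a > α / ((α - 1) (n + 1))`) while the second is negative, so for `k ≥ 2` the equilibrium is
unstable and for `k = 1` the sign of `ξ (ab)^(α-1) - 1` decides. -/

open Matrix Polynomial

section TwoBlock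

variable {R : Type*} {n : ℕ}

def twoBlock (k : ℕ) (x y : R) : Fin n → R := fun i => if (i : ℕ) < k then x else y

theorem comp_twoBlock {S : Type*} (f : R → S) (k : ℕ) (x y : R) :
    f ∘ (twoBlock k x y : Fin n → R) = twoBlock k (f x) (f y) := by
  ext i; simp only [twoBlock, Function.comp_apply]; split_ifs <;> rfl

@[to_additive]
theorem prod_twoBlock [CommMonoid R] {k : ℕ} (hk : k ≤ n) (x y : R) :
    ∏ i, (twoBlock k x y : Fin n → R) i = x ^ k * y ^ (n - k) := by
  simp only [twoBlock]
  rw [Finset.prod_ite, prod_const, prod_const, Fin.card_filter_val_lt, filter_not,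
    card_sdiff_of_subset (filter_subset _ _), Fin.card_filter_val_lt, card_univ, Fintype.card_fin,
    min_eq_right hk]

end TwoBlock

theorem det_diagonal_add_vecMulVec {K ι : Type*} [Field K] [Fintype ι] [DecidableEq ι]
    {d : ι → K} (hd : ∀ i, d i ≠ 0) (u v : ι → K) :
    (diagonal d + vecMulVec u v).det = (∏ i, d i) * (1 + ∑ i, u i * v i / d i) := by
  have hfactor : diagonal d + vecMulVec u v
      = diagonal d * (1 + vecMulVec (fun i => u i / d i) v) := by
    ext i j
    simp only [Matrix.add_apply, mul_add, diagonal_mul, diagonal_apply, one_apply, vecMulVec_apply,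
      ← mul_assoc, mul_div_cancel₀ _ (hd i)]
    split_ifs <;> simp
  rw [hfactor, det_mul, det_diagonal, vecMulVec_eq Unit, det_one_add_replicateCol_mul_replicateRow,
    dotProduct]
  simp only [div_mul_eq_mul_div, mul_comm (v _)]

theorem charpoly_diagonal_sub_vecMulVec_twoBlock {K : Type*} [Field K] [Infinite K] {n k : ℕ}
    (hk : 1 ≤ k) (hkn : k < n) (p q s s' t t' : K) :
    (diagonal (twoBlock k p q) - vecMulVec (twoBlock k s s') (twoBlock k t t') :
        Matrix (Fin n) (Fin n) K).charpoly =
      (X - C p) ^ (k - 1) * (X - C q) ^ (n - k - 1) *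
        ((X - C p) * (X - C q) + C (k * s * t) * (X - C q) +
          C ((n - k : ℕ) * s' * t') * (X - C p)) := by
  -- The determinant lemma needs `z ∉ {p, q}`; polynomials agreeing off a finite set are equal.
  apply eq_of_infinite_eval_eq
  refine ((Set.finite_singleton q).insert p).infinite_compl.mono fun z hz => ?_
  simp only [Set.mem_compl_iff, Set.mem_insert_iff, Set.mem_singleton_iff, not_or] at hz
  have hzp : z - p ≠ 0 := sub_ne_zero.2 hz.1
  have hzq : z - q ≠ 0 := sub_ne_zero.2 hz.2
  have hshift : scalar (Fin n) z - (diagonal (twoBlock k p q) -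
        vecMulVec (twoBlock k s s') (twoBlock k t t'))
      = diagonal (twoBlock k (z - p) (z - q)) + vecMulVec (twoBlock k s s') (twoBlock k t t') := by
    ext i j
    simp only [scalar_apply, Matrix.sub_apply, Matrix.add_apply, diagonal_apply, vecMulVec_apply,
      twoBlock]
    split_ifs <;> ring
  have hd : ∀ i, (twoBlock k (z - p) (z - q) : Fin n → K) i ≠ 0 := by
    intro i; simp only [twoBlock]; split_ifs <;> assumption
  have hsum : ∑ i : Fin n, twoBlock k s s' i * twoBlock k t t' i / twoBlock k (z - p) (z - q) i
      = ∑ i : Fin n, twoBlock k (s * t / (z - p)) (s' * t' / (z - q)) i := by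
    congr 1; ext i; simp only [twoBlock]; split_ifs <;> rfl
  have hpow : ∀ (x : K) (m : ℕ), 1 ≤ m → x ^ m = x ^ (m - 1) * x := fun x m hm => by
    rw [← pow_succ, Nat.sub_add_cancel hm]
  rw [Set.mem_ofPred_eq, eval_charpoly, hshift, det_diagonal_add_vecMulVec hd, hsum,
    prod_twoBlock hkn.le, sum_twoBlock hkn.le, nsmul_eq_mul, nsmul_eq_mul,
    hpow _ k hk, hpow _ (n - k) (by omega)]
  simp only [eval_mul, eval_pow, eval_sub, eval_add, eval_X, eval_C]
  field_simp
  ring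

section RealSpectrum

variable {ι : Type*} [Fintype ι] [DecidableEq ι] {M : Matrix ι ι ℝ} {s : Multiset ℝ}

theorem isEigenvalue_iff_of_charpoly_eq_prod (h : M.charpoly = (s.map fun r => X - C r).prod)
    (μ : ℂ) : IsEigenvalue M μ ↔ ∃ r ∈ s, (r : ℂ) = μ := by
  have hmap : M.charpoly.map (algebraMap ℝ ℂ) = ((s.map (↑)).map fun z : ℂ => X - C z).prod := by
    simp [h, Polynomial.map_multiset_prod, Multiset.map_map]
  rw [IsEigenvalue, hmap, ← mem_roots (monic_multiset_prod_of_monic _ _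
    fun z _ => monic_X_sub_C z).ne_zero, roots_multiset_prod_X_sub_C, Multiset.mem_map]

theorem linStable_iff_of_charpoly_eq_prod (h : M.charpoly = (s.map fun r => X - C r).prod) :
    LinStable M ↔ ∀ r ∈ s, r < 0 := by
  simp [LinStable, isEigenvalue_iff_of_charpoly_eq_prod h]

theorem linUnstable_iff_of_charpoly_eq_prod (h : M.charpoly = (s.map fun r => X - C r).prod) :
    LinUnstable M ↔ ∃ r ∈ s, 0 < r := by
  simp [LinUnstable, isEigenvalue_iff_of_charpoly_eq_prod h]

theorem LinUnstable.not_linStable (h : LinUnstable M) : ¬ LinStable M := fun hs =>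
  let ⟨μ, hμ, hre⟩ := h
  (hs μ hμ).not_gt hre

theorem linStable_iff_and_criticalPt_of_charpoly_eq_prod
    (h : M.charpoly = (s.map fun r => X - C r).prod) {e : ℝ} (he : e ∈ s)
    (hneg : ∀ r ∈ s, r ≠ e → r < 0) :
    (LinStable M ↔ e < 0) ∧ (e = 0 → CriticalPt M) := by
  rw [CriticalPt, linStable_iff_of_charpoly_eq_prod h, linUnstable_iff_of_charpoly_eq_prod h]
  refine ⟨⟨fun hs => hs e he, fun he' r hr => ?_⟩, ?_⟩
  · rcases eq_or_ne r e with rfl | hre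
    exacts [he', hneg r hr hre]
  · rintro rfl
    refine ⟨fun hs => (hs 0 he).false, ?_⟩
    rintro ⟨r, hr, hpos⟩
    rcases eq_or_ne r 0 with rfl | hre
    exacts [hpos.false, (hneg r hr hre).not_gt hpos]

end RealSpectrum

theorem mul_rpow_sub_one_lt_slope_rpow {α a b : ℝ} (hα : 1 < α) (hb : 0 < b) (hba : b < a) :
    α * b ^ (α - 1) < slope (fun x => x ^ α) b a ∧ slope (fun x => x ^ α) b a < α * a ^ (α - 1) :=
  have hconv := strictConvexOn_rpow hα
  ⟨hconv.lt_slope_of_hasDerivAt hb.le (hb.trans hba).le hba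
      (Real.hasDerivAt_rpow_const (Or.inl hb.ne')),
    hconv.slope_lt_of_hasDerivAt hb.le (hb.trans hba).le hba
      (Real.hasDerivAt_rpow_const (Or.inl (hb.trans hba).ne'))⟩

section StarGraph

variable {n : ℕ}

theorem starP_eq_zero {A : Finset (Fin n)} (hA : A ≠ univ) (hA' : #A ≠ 1) : starP n A = 0 := by
  simp [starP, hA, hA']

theorem sum_filter_mem_starP_mul (hn : 2 ≤ n) (i : Fin n) (g : Finset (Fin n) → ℝ) :
    ∑ A ∈ univ.filter (fun A : Finset (Fin n) => i ∈ A), starP n A * g A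
      = (g {i} + g univ) / (n + 1) := by
  have hne : ({i} : Finset (Fin n)) ≠ univ := fun h => by
    have := congrArg card h
    simp only [card_singleton, card_univ, Fintype.card_fin] at this
    omega
  rw [← sum_subset (s₁ := {{i}, univ}) ?_ ?_, sum_pair hne]
  · simp only [starP, hne, card_singleton, if_true, if_false]
    ring
  · intro A hA
    simp only [mem_insert, mem_singleton] at hA
    rcases hA with rfl | rfl <;> simp
  · intro A hA hA'
    simp only [mem_filter, mem_univ, true_and, mem_insert, mem_singleton, not_or] at hA hA'
    rw [starP_eq_zero hA'.2 fun hcard => hA'.1 ?_, zero_mul]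
    obtain ⟨x, rfl⟩ := card_eq_one.1 hcard
    rw [mem_singleton.1 hA]

theorem sum_filter_mem_mem_starP_mul {i j : Fin n} (hij : i ≠ j) (g : Finset (Fin n) → ℝ) :
    ∑ A ∈ univ.filter (fun A : Finset (Fin n) => i ∈ A ∧ j ∈ A), starP n A * g A
      = g univ / (n + 1) := by
  rw [← sum_subset (s₁ := {univ}) ?_ ?_, sum_singleton]
  · simp only [starP, if_true]
    ring
  · simp
  · intro A hA hA'
    simp only [mem_filter, mem_univ, true_and, mem_singleton] at hA hA'
    rw [starP_eq_zero hA' fun hcard => hij ?_, zero_mul]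
    obtain ⟨x, rfl⟩ := card_eq_one.1 hcard
    rw [mem_singleton.1 hA.1, mem_singleton.1 hA.2]

theorem warmD_starP (hn : 2 ≤ n) (α : ℝ) (w : Fin n → ℝ) (hw : ∑ j, w j ^ α ≠ 0) :
    warmD α (starP n) w
      = diagonal (fun i => α / ((n + 1) * ∑ j, w j ^ α) * w i ^ (α - 1) - 1)
        - vecMulVec (fun i => α / ((n + 1) * (∑ j, w j ^ α) ^ 2) * w i ^ α)
            (fun j => w j ^ (α - 1)) := by
  ext i j
  simp only [warmD, of_apply, Matrix.sub_apply, diagonal_apply, vecMulVec_apply, mul_div_assoc]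
  split_ifs with hij
  · subst hij
    rw [sum_filter_mem_starP_mul hn]
    simp only [sum_singleton, sub_self, zero_div, zero_add]
    field_simp
    ring
  · simp only [div_eq_mul_one_div (starP n _)]
    rw [sum_filter_mem_mem_starP_mul hij]
    field_simp
    ring

theorem rpow_eq_of_warmF_starP_eq_zero (hn : 2 ≤ n) {α : ℝ} {w : Fin n → ℝ} {i : Fin n}
    (hwi : 0 < w i) (hw : ∑ j, w j ^ α ≠ 0) (h : warmF α (starP n) w i = 0) :
    w i ^ α = (∑ j, w j ^ α) * ((n + 1) * w i - 1) := by
  have hpos : 0 < w i ^ α := Real.rpow_pos_of_pos hwi α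
  simp only [warmF, mul_div_assoc] at h
  rw [sum_filter_mem_starP_mul hn, sum_singleton, div_self hpos.ne'] at h
  field_simp at h
  linarith

end StarGraph

section StarEquilibrium

variable {n k : ℕ} {α a b : ℝ}

def starEta (n : ℕ) (α a b : ℝ) (k : ℕ) : ℝ :=
  (k : ℝ) * a ^ α + ((n : ℝ) - (k : ℝ)) * b ^ α

theorem starXi_eq : starXi n α a b k = α / ((n + 1) * starEta n α a b k ^ 2) := rfl

theorem starEta_pos (hk : 1 ≤ k) (hkn : k ≤ n) (ha : 0 < a) (hb : 0 < b) :
    0 < starEta n α a b k := by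
  have hk' : (1 : ℝ) ≤ k := by exact_mod_cast hk
  have hkn' : (0 : ℝ) ≤ n - k := by rw [sub_nonneg]; exact_mod_cast hkn
  have := Real.rpow_pos_of_pos ha α
  rw [starEta]
  positivity

theorem sum_rpow_twoBlock (hk : k ≤ n) (α a b : ℝ) :
    ∑ j : Fin n, twoBlock k a b j ^ α = starEta n α a b k := by
  rw [show (fun j : Fin n => twoBlock k a b j ^ α) = twoBlock k (a ^ α) (b ^ α) from
    comp_twoBlock (· ^ α) k a b, sum_twoBlock hk, nsmul_eq_mul, nsmul_eq_mul, Nat.cast_sub hk,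
    starEta]

theorem charpoly_warmD_starP_twoBlock (hk : 1 ≤ k) (hkn : k < n) (ha : 0 < a) (hb : 0 < b)
    (hsum : (k : ℝ) * a + ((n : ℝ) - (k : ℝ)) * b = 1) :
    (warmD α (starP n) (twoBlock k a b)).charpoly =
      ((Multiset.replicate (k - 1) (starXi n α a b k * starEta n α a b k * a ^ (α - 1) - 1) +
        Multiset.replicate (n - k - 1) (starXi n α a b k * starEta n α a b k * b ^ (α - 1) - 1) +
        {-1, starXi n α a b k * (b * a) ^ (α - 1) - 1}).map fun r => X - C r).prod := by
  have hη0 := starEta_pos (α := α) hk hkn.le ha hb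
  set η := starEta n α a b k with hη
  set ξ := starXi n α a b k with hξ
  have hD : warmD α (starP n) (twoBlock k a b)
      = diagonal (twoBlock k (ξ * η * a ^ (α - 1) - 1) (ξ * η * b ^ (α - 1) - 1))
        - vecMulVec (twoBlock k (ξ * a ^ α) (ξ * b ^ α))
            (twoBlock k (a ^ (α - 1)) (b ^ (α - 1))) := by
    rw [warmD_starP (by omega) α _ (by rw [sum_rpow_twoBlock hkn.le]; exact hη0.ne'),
      sum_rpow_twoBlock hkn.le, hξ, starXi_eq, ← hη]
    ext i j
    simp only [Matrix.sub_apply, diagonal_apply, vecMulVec_apply, twoBlock]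
    split_ifs <;> field_simp
  have hηdef : η = k * a ^ α + (n - k) * b ^ α := rfl
  have ha' : a ^ α = a * a ^ (α - 1) := by rw [Real.rpow_sub_one ha.ne']; field_simp
  have hb' : b ^ α = b * b ^ (α - 1) := by rw [Real.rpow_sub_one hb.ne']; field_simp
  rw [hD, charpoly_diagonal_sub_vecMulVec_twoBlock hk hkn, Real.mul_rpow hb.le ha.le]
  simp only [Multiset.map_add, Multiset.prod_add, Multiset.map_replicate, Multiset.prod_replicate,
    Multiset.insert_eq_cons, Multiset.map_cons, Multiset.prod_cons, Multiset.map_singleton,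
    Multiset.prod_singleton]
  congr 1
  refine Polynomial.funext fun x => ?_
  simp only [eval_mul, eval_add, eval_sub, eval_X, eval_C, Nat.cast_sub hkn.le]
  clear_value η ξ
  subst hηdef
  rw [ha', hb']
  linear_combination (-(x + 1) * ξ * a ^ (α - 1) * b ^ (α - 1)) * hsum

theorem rpow_eq_of_warmF_starP_twoBlock_eq_zero (hk : 1 ≤ k) (hkn : k < n) (ha : 0 < a)
    (hb : 0 < b) (heq : ∀ i, warmF α (starP n) (twoBlock k a b) i = 0) :
    a ^ α = starEta n α a b k * ((n + 1) * a - 1) ∧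
      b ^ α = starEta n α a b k * ((n + 1) * b - 1) := by
  have hw : ∑ j : Fin n, twoBlock k a b j ^ α ≠ 0 := by
    rw [sum_rpow_twoBlock hkn.le]; exact (starEta_pos hk hkn.le ha hb).ne'
  have hfirst : (twoBlock k a b : Fin n → ℝ) ⟨0, by omega⟩ = a := if_pos hk
  have hlast : (twoBlock k a b : Fin n → ℝ) ⟨k, hkn⟩ = b := if_neg (lt_irrefl k)
  have h0 := rpow_eq_of_warmF_starP_eq_zero (by omega) (by rw [hfirst]; exact ha) hw
    (heq ⟨0, by omega⟩)
  have h1 := rpow_eq_of_warmF_starP_eq_zero (by omega) (by rw [hlast]; exact hb) hw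
    (heq ⟨k, hkn⟩)
  rw [hfirst, sum_rpow_twoBlock hkn.le] at h0
  rw [hlast, sum_rpow_twoBlock hkn.le] at h1
  exact ⟨h0, h1⟩

theorem starXi_mul_starEta_mul_rpow_bounds (hα : 1 < α) (hb : 0 < b) (hba : b < a)
    (hη : 0 < starEta n α a b k) (hea : a ^ α = starEta n α a b k * ((n + 1) * a - 1))
    (heb : b ^ α = starEta n α a b k * ((n + 1) * b - 1)) :
    starXi n α a b k * starEta n α a b k * b ^ (α - 1) < 1 ∧
      1 < starXi n α a b k * starEta n α a b k * a ^ (α - 1) := by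
  have hslope : slope (fun x => x ^ α) b a = (n + 1) * starEta n α a b k := by
    rw [slope_def_field, hea, heb]
    field_simp [sub_ne_zero.2 hba.ne']
    ring
  obtain ⟨hlo, hhi⟩ := mul_rpow_sub_one_lt_slope_rpow hα hb hba
  rw [hslope] at hlo hhi
  have hscale : ∀ x, starXi n α a b k * starEta n α a b k * x
      = α * x / ((n + 1) * starEta n α a b k) := fun x => by
    rw [starXi_eq]; field_simp
  rw [hscale, hscale, div_lt_one (by positivity), one_lt_div (by positivity)]
  exact ⟨hlo, hhi⟩

theorem lt_of_one_lt_starXi_mul_starEta_mul_rpow (hα : 1 < α) (ha : 0 < a)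
    (hη : 0 < starEta n α a b k) (hea : a ^ α = starEta n α a b k * ((n + 1) * a - 1))
    (h : 1 < starXi n α a b k * starEta n α a b k * a ^ (α - 1)) :
    α / ((α - 1) * (n + 1)) < a := by
  have hval : starXi n α a b k * starEta n α a b k * a ^ (α - 1) * a
      = α * ((n + 1) * a - 1) / (n + 1) := by
    have hpow : a ^ (α - 1) * a = a ^ α := by rw [Real.rpow_sub_one ha.ne']; field_simp
    rw [mul_assoc, hpow, hea, starXi_eq]
    field_simp
  have hlt : a < α * ((n + 1) * a - 1) / (n + 1) := by
    rw [← hval]; exact lt_mul_of_one_lt_left ha h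
  rw [lt_div_iff₀ (by positivity)] at hlt
  rw [div_lt_iff₀ (by nlinarith)]
  nlinarith

end StarEquilibrium

theorem star_two_valued_stability_general (n : ℕ) (α : ℝ) (hα : 1 < α)
    (k : ℕ) (hk1 : 1 ≤ k) (hk2 : k ≤ n - 1)
    (a b : ℝ) (hba : b < a) (hb : 0 < b)
    (hsum : (k : ℝ) * a + ((n : ℝ) - (k : ℝ)) * b = 1)
    (heq : ∀ i, warmF α (starP n) (fun i => if (i : ℕ) < k then a else b) i = 0) :
    (LinStable (warmD α (starP n) (fun i => if (i : ℕ) < k then a else b)) ↔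
      ((k = 1 ∧ starXi n α a b k * (b * a) ^ (α - 1) < 1) ∨
       (2 ≤ k ∧ a < α / ((α - 1) * ((n : ℝ) + 1))))) ∧
    (((k = 1 ∧ starXi n α a b k * (b * a) ^ (α - 1) = 1) ∨
       (2 ≤ k ∧ a = α / ((α - 1) * ((n : ℝ) + 1)))) →
      CriticalPt (warmD α (starP n) (fun i => if (i : ℕ) < k then a else b))) := by
  have hkn : k < n := by omega
  have ha : 0 < a := hb.trans hba
  have hη := starEta_pos (α := α) hk1 hkn.le ha hb
  obtain ⟨hea, heb⟩ := rpow_eq_of_warmF_starP_twoBlock_eq_zero hk1 hkn ha hb heq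
  obtain ⟨hB, hA⟩ := starXi_mul_starEta_mul_rpow_bounds hα hb hba hη hea heb
  have hthreshold := lt_of_one_lt_starXi_mul_starEta_mul_rpow hα ha hη hea hA
  have hchar := charpoly_warmD_starP_twoBlock (α := α) hk1 hkn ha hb hsum
  show (LinStable (warmD α (starP n) (twoBlock k a b)) ↔ _) ∧
    (_ → CriticalPt (warmD α (starP n) (twoBlock k a b)))
  rcases hk1.eq_or_lt with rfl | hk
  · have hE := linStable_iff_and_criticalPt_of_charpoly_eq_prod hchar
      (e := starXi n α a b 1 * (b * a) ^ (α - 1) - 1) (by simp) fun r hr hne => by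
      simp only [Multiset.mem_add, Multiset.mem_replicate, Multiset.insert_eq_cons,
        Multiset.mem_cons, Multiset.mem_singleton] at hr
      rcases hr with ((⟨h, -⟩ | ⟨-, rfl⟩) | rfl | rfl)
      exacts [absurd rfl h, by linarith, neg_one_lt_zero, absurd rfl hne]
    simpa [sub_neg, sub_eq_zero] using hE
  · have hunstable : LinUnstable (warmD α (starP n) (twoBlock k a b)) :=
      (linUnstable_iff_of_charpoly_eq_prod hchar).2
        ⟨starXi n α a b k * starEta n α a b k * a ^ (α - 1) - 1,
          Multiset.mem_add.2 (.inl (Multiset.mem_add.2 (.inl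
            (Multiset.mem_replicate.2 ⟨by omega, rfl⟩)))), by linarith⟩
    refine ⟨iff_of_false hunstable.not_linStable ?_, ?_⟩ <;>
      rintro (⟨rfl, -⟩ | ⟨-, h⟩) <;> first | omega | linarith

/-- **Stability of two-valued star-graph equilibria.** Suppose
`w = (a,…,a,b,…,b)` (value `a` on the first `k` coordinates, `b` on the rest,
`1 ≤ k ≤ n−1`, `a > b > 0`, `k a + (n−k) b = 1`) is an equilibrium of the WARM star
graph.  Then `w` is linearly stable iff either `k = 1` and `ξ (b a)^{α−1} < 1`, or
`k ≥ 2` and `a < α/((α−1)(n+1))`; and `w` is critical if equality holds in the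
corresponding condition. -/
theorem star_two_valued_stability (n : ℕ) (hn : 2 ≤ n) (α : ℝ) (hα : 1 < α)
    (k : ℕ) (hk1 : 1 ≤ k) (hk2 : k ≤ n - 1)
    (a b : ℝ) (hba : b < a) (hb : 0 < b)
    (hsum : (k : ℝ) * a + ((n : ℝ) - (k : ℝ)) * b = 1)
    (heq : ∀ i, warmF α (starP n) (fun i => if (i : ℕ) < k then a else b) i = 0) :
    (LinStable (warmD α (starP n) (fun i => if (i : ℕ) < k then a else b)) ↔
      ((k = 1 ∧ starXi n α a b k * (b * a) ^ (α - 1) < 1) ∨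
       (2 ≤ k ∧ a < α / ((α - 1) * ((n : ℝ) + 1))))) ∧
    (((k = 1 ∧ starXi n α a b k * (b * a) ^ (α - 1) = 1) ∨
       (2 ≤ k ∧ a = α / ((α - 1) * ((n : ℝ) + 1)))) →
      CriticalPt (warmD α (starP n) (fun i => if (i : ℕ) < k then a else b))) :=
  star_two_valued_stability_general n α hα k hk1 hk2 a b hba hb hsum heq

end
end

section
/- Consider the WARM star graph with two edges (n = 2). Then: (a) for 1 < α ≤ 3, the unique equilibrium is (1/2, 1/2); it is linearly stable if α < 3 and critical if α = 3. (b) For α > 3, the equilibria are exactly (1/2, 1/2), (v, 1−v) and (1−v, v) for a unique v = v(α) ∈ (1/2, 2/3); the equilibria (v, 1−v) and (1−v, v) are linearly stable while (1/2, 1/2) is linearly unstable. Moreover v(α) is strictly increasing on (3, ∞), with v(α) → 1/2 as α ↓ 3 and v(α) → 2/3 as α → ∞. -/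
open Finset

noncomputable section

/-- The WARM star graph weight on two edges: each nonempty subset of `[2]` gets mass
`1/3`. -/
def p2 : Finset (Fin 2) → ℝ := fun A => if A = ∅ then 0 else 1 / 3

open Real Filter Topology Set Function

/-!
Write an interior point of `Δ₂` as `(σ u, σ (-u))`, `σ` the logistic sigmoid, so that
`exp u = v₁ / v₂`. The equilibrium equations become `exp (α u) (2 - exp u) = 2 exp u - 1`,
that is `G u = α u` with `G u = log (2 exp u - 1) - log (2 - exp u)` and `|u| < log 2`; by the
symmetry `v₁ ↔ v₂` it suffices to look at `u ≥ 0`. On `[0, log 2)` the function `G` is strictly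
convex with `G 0 = 0`, `G' 0 = 3` and `G → ∞` at `log 2`, so the secant slope `G u / u`
increases strictly from `3` to `∞`. Hence `u = 0` is the only equilibrium for `α ≤ 3`, while
for `α > 3` there is exactly one more pair `±u(α)`, with `u(α)` increasing from `0` to `log 2`;
then `v(α) = σ (u(α))`.

The Jacobian at `(x, y)` is `-1` plus a rank-one matrix of trace `s`, so its eigenvalues are
`-1` and `s - 1`. At an equilibrium `s = α / G' u`: this is `α / 3` at `u = 0`, and it is below
`1` at `u(α)` because the secant slope `α = G u / u` of a strictly convex function is less
than `G' u`.
-/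

namespace WarmStar

variable {α : ℝ}

def G (u : ℝ) : ℝ := log (2 * exp u - 1) - log (2 - exp u)

def G' (u : ℝ) : ℝ := 3 * exp u / ((2 * exp u - 1) * (2 - exp u))

lemma G_zero : G 0 = 0 := by simp [G]

lemma G'_zero : G' 0 = 3 := by norm_num [G']

lemma G'_neg (u : ℝ) : G' (-u) = G' u := by
  have := exp_pos u
  simp only [G', exp_neg]
  field_simp

lemma hasDerivAt_G {u : ℝ} (h₁ : 1 < 2 * exp u) (h₂ : exp u < 2) :
    HasDerivAt G (G' u) u := by
  have hl := (((hasDerivAt_exp u).const_mul 2).sub_const 1).log (by linarith)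
  have hr := ((hasDerivAt_exp u).const_sub 2).log (by linarith)
  refine (hl.sub hr).congr_deriv ?_
  have : 2 * exp u - 1 ≠ 0 := by linarith
  have : 2 - exp u ≠ 0 := by linarith
  unfold G'
  field_simp
  ring

lemma hasDerivAt_G_of_mem {u : ℝ} (hu : u ∈ Ico 0 (log 2)) : HasDerivAt G (G' u) u :=
  hasDerivAt_G (by linarith [one_le_exp hu.1]) ((lt_log_iff_exp_lt two_pos).1 hu.2)

lemma strictMonoOn_G' : StrictMonoOn G' (Ico 0 (log 2)) := by
  intro a ha b hb hab
  have ha1 : 1 ≤ exp a := one_le_exp ha.1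
  have hab' : exp a < exp b := exp_lt_exp.2 hab
  have hb2 : exp b < 2 := (lt_log_iff_exp_lt two_pos).1 hb.2
  rw [G', G', div_lt_div_iff₀ (by nlinarith) (by nlinarith)]
  nlinarith [mul_pos (sub_pos.2 hab') (by nlinarith : (0:ℝ) < exp a * exp b - 1)]

lemma strictConvexOn_G : StrictConvexOn ℝ (Ico 0 (log 2)) G := by
  refine StrictMonoOn.strictConvexOn_of_deriv (convex_Ico _ _)
    (fun u hu => (hasDerivAt_G_of_mem hu).continuousAt.continuousWithinAt) ?_
  rw [interior_Ico]
  exact (strictMonoOn_G'.mono Ioo_subset_Ico_self).congr fun u hu =>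
    ((hasDerivAt_G_of_mem (Ioo_subset_Ico_self hu)).deriv).symm

lemma zero_mem_Ico_log_two : (0 : ℝ) ∈ Ico 0 (log 2) := ⟨le_rfl, log_pos one_lt_two⟩

lemma strictMonoOn_slope_G : StrictMonoOn (slope G 0) (Ioo 0 (log 2)) := fun a ha b hb hab => by
  simpa only [slope_def_field] using strictConvexOn_G.secant_strict_mono zero_mem_Ico_log_two
    (Ioo_subset_Ico_self ha) (Ioo_subset_Ico_self hb) ha.1.ne' hb.1.ne' hab

lemma three_lt_slope_G {u : ℝ} (hu : u ∈ Ioo 0 (log 2)) : 3 < slope G 0 u :=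
  G'_zero ▸ strictConvexOn_G.lt_slope_of_hasDerivAt zero_mem_Ico_log_two (Ioo_subset_Ico_self hu)
    hu.1 (hasDerivAt_G_of_mem zero_mem_Ico_log_two)

lemma slope_G_lt_G' {u : ℝ} (hu : u ∈ Ioo 0 (log 2)) : slope G 0 u < G' u :=
  strictConvexOn_G.slope_lt_of_hasDerivAt zero_mem_Ico_log_two (Ioo_subset_Ico_self hu)
    hu.1 (hasDerivAt_G_of_mem (Ioo_subset_Ico_self hu))

lemma tendsto_G_nhdsLT_log_two : Tendsto G (𝓝[<] log 2) atTop := by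
  have hgap : Tendsto (fun u => 2 - exp u) (𝓝[<] log 2) (𝓝[>] 0) := by
    refine tendsto_nhdsWithin_iff.2 ⟨?_, eventually_nhdsWithin_of_forall fun u hu => ?_⟩
    · have hc : Continuous fun u => 2 - exp u := by fun_prop
      simpa [exp_log two_pos] using (hc.tendsto (log 2)).mono_left nhdsWithin_le_nhds
    · exact sub_pos.2 ((lt_log_iff_exp_lt two_pos).1 hu)
  have hfirst : Tendsto (fun u => log (2 * exp u - 1)) (𝓝[<] log 2) (𝓝 (log 3)) := by
    have := (((continuous_const.mul continuous_exp).sub continuous_const).tendsto (log 2)).log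
      (by norm_num [exp_log two_pos] : (2 : ℝ) * exp (log 2) - 1 ≠ 0)
    simpa [exp_log two_pos, show (2 : ℝ) * 2 - 1 = 3 by norm_num]
      using this.mono_left nhdsWithin_le_nhds
  exact hfirst.add_atTop (tendsto_neg_atBot_atTop.comp (tendsto_log_nhdsGT_zero.comp hgap))

lemma Ioi_three_subset_image_slope_G : Set.Ioi 3 ⊆ slope G 0 '' Ioo 0 (log 2) := by
  have hlog : (0 : ℝ) < log 2 := log_pos one_lt_two
  refine isPreconnected_Ioo.intermediate_value_Ioi (l₁ := 𝓝[>] 0) (l₂ := 𝓝[<] log 2)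
    (le_principal_iff.2 (Ioo_mem_nhdsGT hlog)) (le_principal_iff.2 (Ioo_mem_nhdsLT hlog))
    (fun u hu => ?_) ?_ ?_
  · have hG := (hasDerivAt_G_of_mem (Ioo_subset_Ico_self hu)).continuousAt
    have : ContinuousAt (fun v => (G v - G 0) / (v - 0)) u :=
      (hG.sub continuousAt_const).div (continuousAt_id.sub continuousAt_const)
        (sub_ne_zero.2 hu.1.ne')
    simpa only [← slope_def_field] using this.continuousWithinAt
  · exact G'_zero ▸ (hasDerivAt_iff_tendsto_slope.1
      (hasDerivAt_G_of_mem zero_mem_Ico_log_two)).mono_left (nhdsGT_le_nhdsNE 0)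
  · have hinv : Tendsto (fun u : ℝ => u⁻¹) (𝓝[<] log 2) (𝓝 (log 2)⁻¹) :=
      (tendsto_inv₀ hlog.ne').mono_left nhdsWithin_le_nhds
    refine (hinv.pos_mul_atTop (inv_pos.2 hlog) tendsto_G_nhdsLT_log_two).congr fun u => ?_
    simp [slope_def_field, G_zero, div_eq_inv_mul]

/-- Only meaningful for `3 < α`; otherwise `invFunOn` returns an arbitrary value. -/
def logitRoot (α : ℝ) : ℝ := invFunOn (slope G 0) (Ioo 0 (log 2)) α

lemma logitRoot_mem (hα : 3 < α) : logitRoot α ∈ Ioo 0 (log 2) :=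
  invFunOn_mem (Ioi_three_subset_image_slope_G hα)

lemma slope_G_logitRoot (hα : 3 < α) : slope G 0 (logitRoot α) = α :=
  invFunOn_eq (Ioi_three_subset_image_slope_G hα)

lemma logitRoot_slope_G {u : ℝ} (hu : u ∈ Ioo 0 (log 2)) : logitRoot (slope G 0 u) = u :=
  strictMonoOn_slope_G.injOn (logitRoot_mem (three_lt_slope_G hu)) hu
    (slope_G_logitRoot (three_lt_slope_G hu))

lemma logitRoot_lt_iff (hα : 3 < α) {s : ℝ} (hs : s ∈ Ioo 0 (log 2)) :
    logitRoot α < s ↔ α < slope G 0 s := by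
  conv_rhs => rw [← slope_G_logitRoot hα]
  exact (strictMonoOn_slope_G.lt_iff_lt (logitRoot_mem hα) hs).symm

lemma lt_logitRoot_iff (hα : 3 < α) {s : ℝ} (hs : s ∈ Ioo 0 (log 2)) :
    s < logitRoot α ↔ slope G 0 s < α := by
  conv_rhs => rw [← slope_G_logitRoot hα]
  exact (strictMonoOn_slope_G.lt_iff_lt hs (logitRoot_mem hα)).symm

lemma strictMonoOn_logitRoot : StrictMonoOn logitRoot (Set.Ioi 3) := fun _ hα _ hβ hαβ =>
  (logitRoot_lt_iff hα (logitRoot_mem hβ)).2 ((slope_G_logitRoot hβ).symm ▸ hαβ)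

lemma tendsto_logitRoot_nhdsGT_three : Tendsto logitRoot (𝓝[>] 3) (𝓝 0) := by
  have hlog : (0 : ℝ) < log 2 := log_pos one_lt_two
  refine tendsto_order.2 ⟨fun a ha => ?_, fun b hb => ?_⟩
  · filter_upwards [self_mem_nhdsWithin] with α hα using ha.trans (logitRoot_mem hα).1
  · have hs : min b (log 2 / 2) ∈ Ioo 0 (log 2) := ⟨lt_min hb (by positivity), by
      linarith [min_le_right b (log 2 / 2)]⟩
    filter_upwards [Ioo_mem_nhdsGT (three_lt_slope_G hs)] with α hα
    exact ((logitRoot_lt_iff hα.1 hs).2 hα.2).trans_le (min_le_left _ _)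

lemma tendsto_logitRoot_atTop : Tendsto logitRoot atTop (𝓝 (log 2)) := by
  have hlog : (0 : ℝ) < log 2 := log_pos one_lt_two
  refine tendsto_order.2 ⟨fun a ha => ?_, fun b hb => ?_⟩
  · have hs : max a (log 2 / 2) ∈ Ioo 0 (log 2) := ⟨by
      linarith [le_max_right a (log 2 / 2)], max_lt ha (by linarith)⟩
    filter_upwards [eventually_gt_atTop (slope G 0 (max a (log 2 / 2)))] with α hα
    have hα3 : 3 < α := (three_lt_slope_G hs).trans hα
    exact (le_max_left _ _).trans_lt ((lt_logitRoot_iff hα3 hs).2 hα)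
  · filter_upwards [eventually_gt_atTop 3] with α hα using (logitRoot_mem hα).2.trans hb

def IsWarmEquilibrium {ι : Type*} [Fintype ι] [DecidableEq ι] (α : ℝ) (p : Finset ι → ℝ)
    (v : ι → ℝ) : Prop :=
  ∀ i, warmF α p v i = 0

lemma warmF_p2_zero (α x y : ℝ) :
    warmF α p2 ![x, y] 0 =
      -x + (1 / 3 * x ^ α / x ^ α + 1 / 3 * x ^ α / (x ^ α + y ^ α)) := by
  rw [warmF, show univ.filter (fun A : Finset (Fin 2) => 0 ∈ A) = {{0}, {0, 1}} by decide,
    sum_pair (by decide)]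
  simp [p2]

lemma warmF_p2_one (α x y : ℝ) :
    warmF α p2 ![x, y] 1 =
      -y + (1 / 3 * y ^ α / y ^ α + 1 / 3 * y ^ α / (x ^ α + y ^ α)) := by
  rw [warmF, show univ.filter (fun A : Finset (Fin 2) => 1 ∈ A) = {{1}, {0, 1}} by decide,
    sum_pair (by decide)]
  simp [p2]

lemma isWarmEquilibrium_p2_iff {x y : ℝ} (hx : 0 < x) (hy : 0 < y) (hxy : x + y = 1) :
    IsWarmEquilibrium α p2 ![x, y] ↔ x ^ α * (3 * y - 1) = y ^ α * (3 * x - 1) := by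
  have hxα := rpow_pos_of_pos hx α
  have hyα := rpow_pos_of_pos hy α
  rw [IsWarmEquilibrium, Fin.forall_fin_two, warmF_p2_zero, warmF_p2_one]
  field_simp
  constructor
  · rintro ⟨h, -⟩
    linear_combination h + 3 * x ^ α * hxy
  · intro h
    constructor
    · linear_combination h - 3 * x ^ α * hxy
    · linear_combination -h - 3 * y ^ α * hxy

lemma isWarmEquilibrium_p2_swap {x y : ℝ} (hx : 0 < x) (hy : 0 < y) (hxy : x + y = 1) :
    IsWarmEquilibrium α p2 ![y, x] ↔ IsWarmEquilibrium α p2 ![x, y] := by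
  rw [isWarmEquilibrium_p2_iff hx hy hxy, isWarmEquilibrium_p2_iff hy hx (by linarith), eq_comm]

def pointOfLogit (u : ℝ) : Fin 2 → ℝ := ![sigmoid u, sigmoid (-u)]

lemma sigmoid_add_sigmoid_neg (u : ℝ) : sigmoid u + sigmoid (-u) = 1 := by
  rw [sigmoid_neg]; ring

lemma sigmoid_eq_exp_mul_sigmoid_neg (u : ℝ) : sigmoid u = exp u * sigmoid (-u) := by
  rw [← sigmoid_mul_rexp_neg, mul_left_comm, ← exp_add, add_neg_cancel, exp_zero, mul_one]

lemma pointOfLogit_zero : pointOfLogit 0 = ![(1 : ℝ) / 2, 1 / 2] := by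
  simp [pointOfLogit, sigmoid_zero]

lemma pointOfLogit_eq (u : ℝ) : pointOfLogit u = ![sigmoid u, 1 - sigmoid u] := by
  rw [pointOfLogit, sigmoid_neg]

lemma pointOfLogit_neg (u : ℝ) : pointOfLogit (-u) = ![1 - sigmoid u, sigmoid u] := by
  rw [pointOfLogit, neg_neg, sigmoid_neg]

lemma eq_pointOfLogit {w : Fin 2 → ℝ} (h0 : 0 < w 0) (h1 : 0 < w 1) (hw : w 0 + w 1 = 1) :
    w = pointOfLogit (log (w 0 / w 1)) := by
  have hσ : sigmoid (log (w 0 / w 1)) = w 0 := by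
    rw [sigmoid_def, exp_neg, exp_log (div_pos h0 h1), inv_div]
    field_simp
    linarith
  ext i
  fin_cases i
  · exact hσ.symm
  · simp only [Fin.mk_one, pointOfLogit, hσ, sigmoid_neg, Matrix.cons_val_one,
      Matrix.cons_val_fin_one]
    linarith

lemma three_mul_sigmoid_sub_one (u : ℝ) :
    3 * sigmoid u - 1 = sigmoid (-u) * (2 * exp u - 1) := by
  have h := sigmoid_add_sigmoid_neg u
  rw [sigmoid_eq_exp_mul_sigmoid_neg] at h ⊢
  linear_combination h

lemma three_mul_sigmoid_neg_sub_one (u : ℝ) :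
    3 * sigmoid (-u) - 1 = sigmoid (-u) * (2 - exp u) := by
  have h := sigmoid_add_sigmoid_neg u
  rw [sigmoid_eq_exp_mul_sigmoid_neg] at h
  linear_combination h

lemma sigmoid_log_two : sigmoid (log 2) = 2 / 3 := by
  rw [sigmoid_def, exp_neg, exp_log two_pos]
  norm_num

lemma isWarmEquilibrium_pointOfLogit_iff_exp (u : ℝ) :
    IsWarmEquilibrium α p2 (pointOfLogit u) ↔ exp (α * u) * (2 - exp u) = 2 * exp u - 1 := by
  have hy := sigmoid_pos (-u)
  have hyy : sigmoid (-u) ^ α * sigmoid (-u) ≠ 0 := (mul_pos (rpow_pos_of_pos hy α) hy).ne'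
  rw [pointOfLogit, isWarmEquilibrium_p2_iff (sigmoid_pos u) hy (sigmoid_add_sigmoid_neg u),
    three_mul_sigmoid_sub_one u, three_mul_sigmoid_neg_sub_one u,
    sigmoid_eq_exp_mul_sigmoid_neg u, mul_rpow (exp_pos u).le hy.le, ← exp_mul, mul_comm u α]
  constructor
  · intro h
    exact mul_left_cancel₀ hyy (by linear_combination h)
  · intro h
    linear_combination sigmoid (-u) ^ α * sigmoid (-u) * h

lemma exp_mul_two_sub_exp_eq_iff {u : ℝ} (hu : 0 < u) :
    exp (α * u) * (2 - exp u) = 2 * exp u - 1 ↔ u < log 2 ∧ slope G 0 u = α := by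
  have ht : 1 < exp u := one_lt_exp_iff.2 hu
  have hslope : slope G 0 u = G u / u := by rw [slope_def_field, G_zero, sub_zero, sub_zero]
  rw [lt_log_iff_exp_lt two_pos, hslope, div_eq_iff hu.ne', G]
  constructor
  · intro h
    have h2 : exp u < 2 := by
      by_contra h2
      nlinarith [exp_pos (α * u)]
    refine ⟨h2, ?_⟩
    rw [← h, log_mul (exp_pos _).ne' (by linarith), log_exp]
    ring
  · rintro ⟨h2, h⟩
    have hlog : log (2 * exp u - 1) = log (exp (α * u) * (2 - exp u)) := by
      rw [log_mul (exp_pos _).ne' (by linarith), log_exp]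
      linarith
    exact (log_injOn_pos (Set.mem_Ioi.2 (by linarith))
      (Set.mem_Ioi.2 (mul_pos (exp_pos _) (by linarith))) hlog).symm

lemma isWarmEquilibrium_pointOfLogit_iff {u : ℝ} (hu : 0 < u) :
    IsWarmEquilibrium α p2 (pointOfLogit u) ↔ u < log 2 ∧ slope G 0 u = α :=
  (isWarmEquilibrium_pointOfLogit_iff_exp u).trans (exp_mul_two_sub_exp_eq_iff hu)

lemma isWarmEquilibrium_pointOfLogit_zero (α : ℝ) : IsWarmEquilibrium α p2 (pointOfLogit 0) :=
  (isWarmEquilibrium_pointOfLogit_iff_exp 0).2 (by norm_num)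

lemma isWarmEquilibrium_pointOfLogit_neg (u : ℝ) :
    IsWarmEquilibrium α p2 (pointOfLogit (-u)) ↔ IsWarmEquilibrium α p2 (pointOfLogit u) := by
  rw [pointOfLogit, pointOfLogit, neg_neg]
  exact isWarmEquilibrium_p2_swap (sigmoid_pos u) (sigmoid_pos (-u)) (sigmoid_add_sigmoid_neg u)

lemma pos_of_isWarmEquilibrium_p2 (hα : 0 < α) {w : Fin 2 → ℝ} (hw : InSimplex w)
    (h : IsWarmEquilibrium α p2 w) : 0 < w 0 ∧ 0 < w 1 := by
  obtain ⟨hnn, hsum⟩ := hw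
  rw [Fin.sum_univ_two] at hsum
  have hw : w = ![w 0, w 1] := by ext i; fin_cases i <;> rfl
  rw [hw] at h
  have h0 := h 0
  have h1 := h 1
  rw [warmF_p2_zero] at h0
  rw [warmF_p2_one] at h1
  constructor
  · refine (hnn 0).lt_of_ne fun hz => ?_
    rw [← hz, zero_rpow hα.ne', show w 1 = 1 by linarith, one_rpow] at h1
    norm_num at h1
  · refine (hnn 1).lt_of_ne fun hz => ?_
    rw [← hz, zero_rpow hα.ne', show w 0 = 1 by linarith, one_rpow] at h0
    norm_num at h0

theorem isWarmEquilibrium_p2_iff_of_inSimplex (hα : 0 < α) {w : Fin 2 → ℝ}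
    (hw : InSimplex w) :
    IsWarmEquilibrium α p2 w ↔ w = pointOfLogit 0 ∨ ∃ u ∈ Ioo 0 (log 2),
      slope G 0 u = α ∧ (w = pointOfLogit u ∨ w = pointOfLogit (-u)) := by
  constructor
  · intro h
    obtain ⟨h0, h1⟩ := pos_of_isWarmEquilibrium_p2 hα hw h
    have hw' := eq_pointOfLogit h0 h1 (by simpa [Fin.sum_univ_two] using hw.2)
    set u := log (w 0 / w 1)
    rw [hw'] at h
    rcases lt_trichotomy u 0 with hneg | hzero | hpos
    · have hneg' : 0 < -u := neg_pos.2 hneg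
      obtain ⟨hlt, hs⟩ := (isWarmEquilibrium_pointOfLogit_iff hneg').1
        ((isWarmEquilibrium_pointOfLogit_neg u).2 h)
      exact Or.inr ⟨-u, ⟨hneg', hlt⟩, hs, Or.inr (by rwa [neg_neg])⟩
    · exact Or.inl (hzero ▸ hw')
    · obtain ⟨hlt, hs⟩ := (isWarmEquilibrium_pointOfLogit_iff hpos).1 h
      exact Or.inr ⟨u, ⟨hpos, hlt⟩, hs, Or.inl hw'⟩
  · rintro (rfl | ⟨u, hu, hs, rfl | rfl⟩)
    · exact isWarmEquilibrium_pointOfLogit_zero α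
    · exact (isWarmEquilibrium_pointOfLogit_iff hu.1).2 ⟨hu.2, hs⟩
    · exact (isWarmEquilibrium_pointOfLogit_neg u).2
        ((isWarmEquilibrium_pointOfLogit_iff hu.1).2 ⟨hu.2, hs⟩)

def coupling (α x y : ℝ) : ℝ := α / 3 * x ^ (α - 1) * y ^ α / (x ^ α + y ^ α) ^ 2

lemma warmD_p2 (α x y : ℝ) : warmD α p2 ![x, y] =
    !![-1 + coupling α x y, -coupling α y x; -coupling α x y, -1 + coupling α y x] := by
  have h0 : univ.filter (fun A : Finset (Fin 2) => 0 ∈ A) = {{0}, {0, 1}} := by decide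
  have h1 : univ.filter (fun A : Finset (Fin 2) => 1 ∈ A) = {{1}, {0, 1}} := by decide
  have h01 : univ.filter (fun A : Finset (Fin 2) => 0 ∈ A ∧ 1 ∈ A) = {{0, 1}} := by decide
  have h10 : univ.filter (fun A : Finset (Fin 2) => 1 ∈ A ∧ 0 ∈ A) = {{0, 1}} := by decide
  ext i j
  fin_cases i <;> fin_cases j <;> simp [warmD, h0, h1, h01, h10, p2, coupling] <;> ring

lemma isEigenvalue_warmD_p2_iff (α x y : ℝ) (μ : ℂ) :
    IsEigenvalue (warmD α p2 ![x, y]) μ ↔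
      μ = -1 ∨ μ = ((coupling α x y + coupling α y x : ℝ) : ℂ) - 1 := by
  rw [warmD_p2, IsEigenvalue, Matrix.charpoly_fin_two, Matrix.trace_fin_two_of,
    Matrix.det_fin_two_of]
  set a := coupling α x y
  set b := coupling α y x
  have hfactor : μ ^ 2 - (-1 + (a : ℂ) + (-1 + b)) * μ + ((-1 + a) * (-1 + b) - b * a) =
      (μ + 1) * (μ - (a + b - 1)) := by
    ring
  simp [hfactor, add_eq_zero_iff_eq_neg, sub_eq_zero]

lemma linStable_warmD_p2_iff (α x y : ℝ) :
    LinStable (warmD α p2 ![x, y]) ↔ coupling α x y + coupling α y x < 1 := by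
  simp only [LinStable, isEigenvalue_warmD_p2_iff]
  constructor
  · intro h
    simpa using h _ (Or.inr rfl)
  · rintro h μ (rfl | rfl) <;> simp [h]

lemma linUnstable_warmD_p2_iff (α x y : ℝ) :
    LinUnstable (warmD α p2 ![x, y]) ↔ 1 < coupling α x y + coupling α y x := by
  simp only [LinUnstable, isEigenvalue_warmD_p2_iff]
  constructor
  · rintro ⟨μ, rfl | rfl, h⟩ <;> simp at h ⊢ <;> linarith
  · intro h
    exact ⟨_, Or.inr rfl, by simpa using h⟩

lemma criticalPt_warmD_p2_iff (α x y : ℝ) :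
    CriticalPt (warmD α p2 ![x, y]) ↔ coupling α x y + coupling α y x = 1 := by
  rw [CriticalPt, linStable_warmD_p2_iff, linUnstable_warmD_p2_iff, not_lt, not_lt,
    le_antisymm_iff, and_comm]

lemma coupling_eq_of_isWarmEquilibrium {x y : ℝ} (hx : 0 < x) (hy : 0 < y) (hxy : x + y = 1)
    (h : IsWarmEquilibrium α p2 ![x, y]) :
    coupling α x y = α / 3 * (3 * x - 1) * (3 * y - 1) / x := by
  rw [isWarmEquilibrium_p2_iff hx hy hxy] at h
  have hS : 0 < x ^ α + y ^ α := by positivity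
  have hxS : x ^ α / (x ^ α + y ^ α) = 3 * x - 1 := by
    rw [div_eq_iff hS.ne']; linear_combination h - 3 * x ^ α * hxy
  have hyS : y ^ α / (x ^ α + y ^ α) = 3 * y - 1 := by
    rw [div_eq_iff hS.ne']; linear_combination -h - 3 * y ^ α * hxy
  rw [coupling, rpow_sub_one hx.ne', ← hxS, ← hyS]
  field_simp

lemma coupling_add_coupling_pointOfLogit {u : ℝ}
    (h : IsWarmEquilibrium α p2 (pointOfLogit u)) :
    coupling α (sigmoid u) (sigmoid (-u)) + coupling α (sigmoid (-u)) (sigmoid u) =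
      α / G' u := by
  have hx := sigmoid_pos u
  have hy := sigmoid_pos (-u)
  have hsum := sigmoid_add_sigmoid_neg u
  rw [pointOfLogit] at h
  rw [coupling_eq_of_isWarmEquilibrium hx hy hsum h, coupling_eq_of_isWarmEquilibrium hy hx
      (by linarith) ((isWarmEquilibrium_p2_swap hx hy hsum).2 h),
    three_mul_sigmoid_sub_one u, three_mul_sigmoid_neg_sub_one u, sigmoid_eq_exp_mul_sigmoid_neg u,
    G', div_div_eq_mul_div]
  rw [sigmoid_eq_exp_mul_sigmoid_neg] at hsum
  have := exp_pos u
  field_simp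
  linear_combination α * (2 * exp u - 1) * (2 - exp u) * hsum

lemma linStable_warmD_pointOfLogit_iff {u : ℝ} (h : IsWarmEquilibrium α p2 (pointOfLogit u)) :
    LinStable (warmD α p2 (pointOfLogit u)) ↔ α / G' u < 1 := by
  rw [← coupling_add_coupling_pointOfLogit h, pointOfLogit, linStable_warmD_p2_iff]

lemma linUnstable_warmD_pointOfLogit_iff {u : ℝ} (h : IsWarmEquilibrium α p2 (pointOfLogit u)) :
    LinUnstable (warmD α p2 (pointOfLogit u)) ↔ 1 < α / G' u := by
  rw [← coupling_add_coupling_pointOfLogit h, pointOfLogit, linUnstable_warmD_p2_iff]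

lemma criticalPt_warmD_pointOfLogit_iff {u : ℝ} (h : IsWarmEquilibrium α p2 (pointOfLogit u)) :
    CriticalPt (warmD α p2 (pointOfLogit u)) ↔ α / G' u = 1 := by
  rw [← coupling_add_coupling_pointOfLogit h, pointOfLogit, criticalPt_warmD_p2_iff]

lemma eq_pointOfLogit_zero_of_le_three (hα : 0 < α) (hα3 : α ≤ 3) {w : Fin 2 → ℝ}
    (hw : InSimplex w) (h : IsWarmEquilibrium α p2 w) : w = pointOfLogit 0 := by
  rcases (isWarmEquilibrium_p2_iff_of_inSimplex hα hw).1 h with hw | ⟨u, hu, hs, -⟩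
  · exact hw
  · linarith [three_lt_slope_G hu]

lemma isWarmEquilibrium_pointOfLogit_logitRoot (hα : 3 < α) :
    IsWarmEquilibrium α p2 (pointOfLogit (logitRoot α)) :=
  (isWarmEquilibrium_pointOfLogit_iff (logitRoot_mem hα).1).2
    ⟨(logitRoot_mem hα).2, slope_G_logitRoot hα⟩

lemma eq_pointOfLogit_of_three_lt (hα : 3 < α) {w : Fin 2 → ℝ} (hw : InSimplex w)
    (h : IsWarmEquilibrium α p2 w) : w = pointOfLogit 0 ∨ w = pointOfLogit (logitRoot α) ∨
      w = pointOfLogit (-logitRoot α) := by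
  rcases (isWarmEquilibrium_p2_iff_of_inSimplex (by linarith) hw).1 h with
    hw | ⟨u, hu, hs, hw | hw⟩
  · exact Or.inl hw
  · exact Or.inr (Or.inl (by rw [hw, ← hs, logitRoot_slope_G hu]))
  · exact Or.inr (Or.inr (by rw [hw, ← hs, logitRoot_slope_G hu]))

lemma linStable_warmD_pointOfLogit_logitRoot (hα : 3 < α) :
    LinStable (warmD α p2 (pointOfLogit (logitRoot α))) := by
  have hu := logitRoot_mem hα
  have hG' : α < G' (logitRoot α) := by simpa [slope_G_logitRoot hα] using slope_G_lt_G' hu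
  exact (linStable_warmD_pointOfLogit_iff (isWarmEquilibrium_pointOfLogit_logitRoot hα)).2
    ((div_lt_one (by linarith)).2 hG')

lemma linStable_warmD_pointOfLogit_neg_logitRoot (hα : 3 < α) :
    LinStable (warmD α p2 (pointOfLogit (-logitRoot α))) := by
  have h := isWarmEquilibrium_pointOfLogit_logitRoot hα
  rw [linStable_warmD_pointOfLogit_iff ((isWarmEquilibrium_pointOfLogit_neg _).2 h), G'_neg,
    ← linStable_warmD_pointOfLogit_iff h]
  exact linStable_warmD_pointOfLogit_logitRoot hα

end WarmStar

open WarmStar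

/-- **The WARM star graph with two edges.**
(a) For `1 < α ≤ 3` the unique equilibrium is `(1/2,1/2)`; it is linearly stable when
`α < 3` and critical when `α = 3`.  (b) For `α > 3` the equilibria are exactly
`(1/2,1/2)`, `(v,1−v)` and `(1−v,v)` with a unique `v = v(α) ∈ (1/2,2/3)`; the latter
two are linearly stable while `(1/2,1/2)` is linearly unstable; and `v(α)` is strictly
increasing on `(3,∞)` with `v(α) → 1/2` as `α ↓ 3` and `v(α) → 2/3` as `α → ∞`. -/
theorem star_two_edges :
    (∀ α : ℝ, 1 < α → α ≤ 3 →
      (∀ i, warmF α p2 ![(1 : ℝ) / 2, 1 / 2] i = 0) ∧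
      (∀ w : Fin 2 → ℝ, InSimplex w → (∀ i, warmF α p2 w i = 0) →
        w = ![(1 : ℝ) / 2, 1 / 2]) ∧
      (α < 3 → LinStable (warmD α p2 ![(1 : ℝ) / 2, 1 / 2])) ∧
      (α = 3 → CriticalPt (warmD α p2 ![(1 : ℝ) / 2, 1 / 2]))) ∧
    ∃ vf : ℝ → ℝ,
      StrictMonoOn vf (Set.Ioi (3 : ℝ)) ∧
      Filter.Tendsto vf (nhdsWithin 3 (Set.Ioi (3 : ℝ))) (nhds (1 / 2)) ∧
      Filter.Tendsto vf Filter.atTop (nhds (2 / 3)) ∧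
      ∀ α : ℝ, 3 < α →
        1 / 2 < vf α ∧ vf α < 2 / 3 ∧
        (∀ i, warmF α p2 ![(1 : ℝ) / 2, 1 / 2] i = 0) ∧
        (∀ i, warmF α p2 ![vf α, 1 - vf α] i = 0) ∧
        (∀ i, warmF α p2 ![1 - vf α, vf α] i = 0) ∧
        (∀ w : Fin 2 → ℝ, InSimplex w → (∀ i, warmF α p2 w i = 0) →
          w = ![(1 : ℝ) / 2, 1 / 2] ∨ w = ![vf α, 1 - vf α] ∨ w = ![1 - vf α, vf α]) ∧
        LinStable (warmD α p2 ![vf α, 1 - vf α]) ∧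
        LinStable (warmD α p2 ![1 - vf α, vf α]) ∧
        LinUnstable (warmD α p2 ![(1 : ℝ) / 2, 1 / 2]) := by
  have hhalf := isWarmEquilibrium_pointOfLogit_zero
  refine ⟨fun α hα1 hα3 => ?_, sigmoid ∘ logitRoot,
    sigmoid_strictMono.comp_strictMonoOn strictMonoOn_logitRoot, ?_, ?_, fun α hα => ?_⟩
  · rw [← pointOfLogit_zero, linStable_warmD_pointOfLogit_iff (hhalf α),
      criticalPt_warmD_pointOfLogit_iff (hhalf α), G'_zero]
    exact ⟨hhalf α, fun w hw h => eq_pointOfLogit_zero_of_le_three (by linarith) hα3 hw h,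
      fun h => by linarith, fun h => by rw [h]; norm_num⟩
  · simpa [sigmoid_zero] using (continuous_sigmoid.tendsto 0).comp tendsto_logitRoot_nhdsGT_three
  · simpa [sigmoid_log_two] using (continuous_sigmoid.tendsto _).comp tendsto_logitRoot_atTop
  · have hu := logitRoot_mem hα
    rw [comp_apply, ← pointOfLogit_eq, ← pointOfLogit_neg, ← pointOfLogit_zero,
      linUnstable_warmD_pointOfLogit_iff (hhalf α), G'_zero]
    exact ⟨by simpa [sigmoid_zero] using sigmoid_lt hu.1, sigmoid_log_two ▸ sigmoid_lt hu.2,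
      hhalf α, isWarmEquilibrium_pointOfLogit_logitRoot hα,
      (isWarmEquilibrium_pointOfLogit_neg _).2 (isWarmEquilibrium_pointOfLogit_logitRoot hα),
      fun w hw h => eq_pointOfLogit_of_three_lt hα hw h,
      linStable_warmD_pointOfLogit_logitRoot hα, linStable_warmD_pointOfLogit_neg_logitRoot hα,
      by linarith⟩

end
end
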